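/- arXiv:1811.08406 — 7 statements merged into one kernel-verified Lean document; each statement's English description precedes it below -/
import Mathlib

section
/- A Vandermonde matrix V with entries V_{ij} = x_i^{j-1} (1 ≤ i,j ≤ n) built from nodes satisfying 0 < x_1 < x_2 < ... < x_n has all its minors positive, i.e., V is strictly totally positive. -/
/-!
For nodes `0 < y₀ < ⋯ < yₖ` and exponents `a₀ < ⋯ < aₖ`, the generalized Vandermonde
determinant `det (yᵢ ^ aⱼ)`, viewed as a function of the last node `t = yₖ`, is a polynomial
with at most `k + 1` monomials. It vanishes at `y₀, …, yₖ₋₁`, and its leading coefficient is the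
generalized Vandermonde determinant of size `k`, positive by induction. By Descartes' rule of
signs it has at most `k` positive roots, so all of its roots lie below `yₖ`, where it is therefore
positive. Every minor of a Vandermonde matrix is such a determinant.
-/

/-- A matrix is strictly totally positive if every minor (determinant of every
square submatrix taken with strictly increasing row and column indices) is positive. -/
def StrictlyTotallyPositive {n : ℕ} (A : Matrix (Fin n) (Fin n) ℝ) : Prop :=
  ∀ (k : ℕ) (f g : Fin k → Fin n), StrictMono f → StrictMono g →
    0 < ((A.submatrix f g).det)

open Polynomial

namespace Polynomial

section Semiring

variable {R : Type*} [Semiring R] [LinearOrder R]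

theorem length_filter_coeffList_ne_zero (P : R[X]) :
    (P.coeffList.filter (· ≠ 0)).length = P.support.card := by
  rcases eq_or_ne P 0 with rfl | hP
  · simp
  have hsupp : P.support = (Finset.range (P.natDegree + 1)).filter (P.coeff · ≠ 0) := by
    ext i
    simpa [Nat.lt_succ_iff] using fun h => le_natDegree_of_ne_zero h
  rw [coeffList, withBotSucc_degree_eq_natDegree_add_one hP, List.filter_map, List.length_map,
    List.filter_reverse, List.length_reverse, hsupp, Finset.card_def, Finset.filter_val,
    Finset.range_val, Multiset.range, Multiset.filter_coe, Multiset.coe_card]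
  rfl

theorem signVariations_lt_card_support {P : R[X]} (hP : P ≠ 0) :
    P.signVariations < P.support.card := by
  have hdestutter := (List.destutter_sublist (· ≠ ·)
    ((P.coeffList.map SignType.sign).filter (· ≠ 0))).length_le
  have hsigns : ((P.coeffList.map SignType.sign).filter (· ≠ 0)).length = P.support.card := by
    rw [List.filter_map, List.length_map, ← length_filter_coeffList_ne_zero]
    simp [Function.comp_def]
  have hpos : 0 < P.support.card := Finset.card_pos.mpr (support_nonempty.mpr hP)
  unfold signVariations
  omega

end Semiring

section LinearOrderedCommRing

variable {R : Type*} [CommRing R] [LinearOrder R] [IsStrictOrderedRing R] {P : R[X]}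

theorem card_lt_card_support_of_pos_isRoot (hP : P ≠ 0) {s : Finset R}
    (hs : ∀ x ∈ s, 0 < x ∧ P.IsRoot x) : s.card < P.support.card := by
  have hsub : s.val ≤ P.roots.filter (0 < ·) :=
    (Multiset.le_iff_subset s.nodup).mpr fun x hx => by
      obtain ⟨hx0, hxr⟩ := hs x hx
      exact Multiset.mem_filter.mpr ⟨(mem_roots hP).mpr hxr, hx0⟩
  calc s.card ≤ P.roots.countP (0 < ·) := by
        rw [Multiset.countP_eq_card_filter]; exact Multiset.card_le_card hsub
    _ ≤ P.signVariations := roots_countP_pos_le_signVariations P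
    _ < P.support.card := signVariations_lt_card_support hP

theorem mem_of_pos_isRoot_of_card_support_le (hP : P ≠ 0) {s : Finset R}
    (hs : ∀ x ∈ s, 0 < x ∧ P.IsRoot x) (hcard : P.support.card ≤ s.card + 1) {r : R}
    (hr : 0 < r) (hroot : P.IsRoot r) : r ∈ s := by
  by_contra hrs
  have := card_lt_card_support_of_pos_isRoot hP
    (Finset.forall_mem_insert _ _ _ |>.mpr ⟨⟨hr, hroot⟩, hs⟩)
  rw [Finset.card_insert_of_notMem hrs] at this
  omega

end LinearOrderedCommRing

end Polynomial

namespace Matrix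

variable {R : Type*}

def genVandermonde {m n : Type*} [Monoid R] (y : m → R) (a : n → ℕ) : Matrix m n R :=
  of fun i j => y i ^ a j

section CommRing

variable [CommRing R] {k : ℕ}

/-- Laplace expansion of `det (genVandermonde (Fin.snoc y t) a)` along the last row, as a
polynomial in `t`. -/
noncomputable def genVandermondePoly (y : Fin k → R) (a : Fin (k + 1) → ℕ) : R[X] :=
  ∑ j : Fin (k + 1), C ((-1) ^ (k + (j : ℕ)) * (genVandermonde y (a ∘ j.succAbove)).det) * X ^ a j

theorem eval_genVandermondePoly (y : Fin k → R) (a : Fin (k + 1) → ℕ) (t : R) :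
    (genVandermondePoly y a).eval t = (genVandermonde (Fin.snoc y t) a).det := by
  rw [det_succ_row _ (Fin.last k), genVandermondePoly, eval_finsetSum]
  refine Finset.sum_congr rfl fun j _ => ?_
  have hminor : (genVandermonde (Fin.snoc y t) a).submatrix (Fin.last k).succAbove j.succAbove
      = genVandermonde y (a ∘ j.succAbove) := by
    ext i i'
    simp [genVandermonde]
  rw [hminor]
  simp only [eval_mul, eval_C, eval_pow, eval_X, Fin.val_last, genVandermonde, of_apply,
    Fin.snoc_last]
  ring

theorem isRoot_genVandermondePoly (y : Fin k → R) (a : Fin (k + 1) → ℕ) (i : Fin k) :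
    (genVandermondePoly y a).IsRoot (y i) := by
  rw [IsRoot, eval_genVandermondePoly]
  refine det_zero_of_row_eq (Fin.castSucc_lt_last i).ne ?_
  ext j
  simp [genVandermonde]

theorem coeff_genVandermondePoly (y : Fin k → R) {a : Fin (k + 1) → ℕ}
    (ha : Function.Injective a) (j : Fin (k + 1)) :
    (genVandermondePoly y a).coeff (a j) =
      (-1) ^ (k + j : ℕ) * (genVandermonde y (a ∘ j.succAbove)).det := by
  rw [genVandermondePoly, finsetSum_coeff, Finset.sum_eq_single j]
  · simp only [coeff_C_mul, coeff_X_pow, if_pos, mul_one]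
  · intro j' _ hj'
    simp only [coeff_C_mul, coeff_X_pow, ha.eq_iff, if_neg hj'.symm, mul_zero]
  · simp

theorem card_support_genVandermondePoly_le (y : Fin k → R) (a : Fin (k + 1) → ℕ) :
    (genVandermondePoly y a).support.card ≤ k + 1 := by
  classical
  calc (genVandermondePoly y a).support.card ≤ (Finset.univ.image a).card := by
        refine Finset.card_le_card fun m hm => ?_
        by_contra hma
        refine mem_support_iff.mp hm ?_
        rw [genVandermondePoly, finsetSum_coeff]
        refine Finset.sum_eq_zero fun j _ => ?_
        have hj : a j ≠ m := fun h => hma (Finset.mem_image.mpr ⟨j, Finset.mem_univ j, h⟩)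
        simp only [coeff_C_mul, coeff_X_pow, if_neg hj.symm, mul_zero]
    _ ≤ k + 1 := by simpa using Finset.card_image_le (s := Finset.univ) (f := a)

theorem natDegree_genVandermondePoly_le (y : Fin k → R) {a : Fin (k + 1) → ℕ}
    (ha : Monotone a) : (genVandermondePoly y a).natDegree ≤ a (Fin.last k) :=
  natDegree_sum_le_of_forall_le _ _ fun j _ =>
    (natDegree_C_mul_X_pow_le _ _).trans (ha (Fin.le_last j))

theorem leadingCoeff_genVandermondePoly (y : Fin k → R) {a : Fin (k + 1) → ℕ}
    (ha : StrictMono a) (hdet : (genVandermonde y (a ∘ Fin.castSucc)).det ≠ 0) :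
    (genVandermondePoly y a).leadingCoeff = (genVandermonde y (a ∘ Fin.castSucc)).det := by
  have hcoeff : (genVandermondePoly y a).coeff (a (Fin.last k)) =
      (genVandermonde y (a ∘ Fin.castSucc)).det := by
    rw [coeff_genVandermondePoly y ha.injective, Fin.val_last, Fin.succAbove_last,
      Even.neg_one_pow ⟨k, rfl⟩, one_mul]
  have hdeg : (genVandermondePoly y a).natDegree = a (Fin.last k) :=
    (natDegree_genVandermondePoly_le y ha.monotone).antisymm
      (le_natDegree_of_ne_zero (hcoeff ▸ hdet))
  rw [leadingCoeff, hdeg, hcoeff]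

end CommRing

theorem det_genVandermonde_pos {k : ℕ} {y : Fin k → ℝ} {a : Fin k → ℕ} (hy₀ : ∀ i, 0 < y i)
    (hy : StrictMono y) (ha : StrictMono a) : 0 < (genVandermonde y a).det := by
  induction k with
  | zero => simp
  | succ k ih =>
    have hinit : StrictMono (Fin.init y) := hy.comp Fin.strictMono_castSucc
    have hminor : 0 < (genVandermonde (Fin.init y) (a ∘ Fin.castSucc)).det :=
      ih (fun i => hy₀ _) hinit (ha.comp Fin.strictMono_castSucc)
    set p := genVandermondePoly (Fin.init y) a
    have hlc : p.leadingCoeff = _ := leadingCoeff_genVandermondePoly _ ha hminor.ne'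
    have hp : p ≠ 0 := leadingCoeff_ne_zero.mp (hlc ▸ hminor.ne')
    have hroots : ∀ r, p.IsRoot r → r < y (Fin.last k) := by
      intro r hr
      rcases le_or_gt r 0 with hr₀ | hr₀
      · exact hr₀.trans_lt (hy₀ _)
      have hcard : p.support.card ≤ (Finset.univ.image (Fin.init y)).card + 1 := by
        rw [Finset.card_image_of_injective _ hinit.injective, Finset.card_univ, Fintype.card_fin]
        exact card_support_genVandermondePoly_le _ _
      have hnodes : ∀ x ∈ Finset.univ.image (Fin.init y), 0 < x ∧ p.IsRoot x := by
        simp only [Finset.mem_image, Finset.mem_univ, true_and, forall_exists_index]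
        rintro _ i rfl
        exact ⟨hy₀ _, isRoot_genVandermondePoly _ _ i⟩
      obtain ⟨i, -, rfl⟩ := Finset.mem_image.mp <|
        mem_of_pos_isRoot_of_card_support_le hp hnodes hcard hr₀ hr
      exact hy (Fin.castSucc_lt_last i)
    have := zero_lt_eval_of_roots_lt_of_leadingCoeff_nonneg hroots (hlc ▸ hminor.le)
    rwa [eval_genVandermondePoly, Fin.snoc_init_self] at this

theorem submatrix_vandermonde {n k : ℕ} [CommRing R] (x : Fin n → R) (f g : Fin k → Fin n) :
    (vandermonde x).submatrix f g = genVandermonde (x ∘ f) (Fin.val ∘ g) := by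
  ext
  simp [genVandermonde]

end Matrix

theorem vandermonde_strictlyTotallyPositive (n : ℕ) (x : Fin n → ℝ)
    (hpos : ∀ i, 0 < x i) (hmono : StrictMono x) :
    StrictlyTotallyPositive (Matrix.vandermonde x) := by
  intro k f g hf hg
  rw [Matrix.submatrix_vandermonde]
  exact Matrix.det_genVandermonde_pos (fun i => hpos (f i)) (hmono.comp hf)
    (Fin.val_strictMono.comp hg)
end

section
/- A Vandermonde matrix V with entries V_{ij} = x_i^{j-1} built from nodes satisfying 0 ≤ x_1 ≤ x_2 ≤ ... ≤ x_n is totally nonnegative, i.e., every minor of V is nonnegative. -/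
open Finset Set

/-- A nonzero real "exponential polynomial" with `m` terms cannot vanish at `m`
distinct positive points. -/
lemma expPoly_coeffs_zero : ∀ (m : ℕ) (a : Fin m → ℕ) (c : Fin m → ℝ) (r : Fin m → ℝ),
    StrictMono a → StrictMono r → (∀ i, 0 < r i) →
    (∀ i, ∑ j, c j * r i ^ a j = 0) → ∀ j, c j = 0 := by
  intro m
  induction m with
  | zero => intro _ _ _ _ _ _ _ j; exact j.elim0
  | succ m ih =>
    intro a c r ha hr hrpos hroot
    have ha0 : ∀ j, a 0 ≤ a j := fun j => ha.monotone (Fin.zero_le j)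
    set e : Fin (m+1) → ℕ := fun j => a j - a 0 with he
    have hae : ∀ j, a j = a 0 + e j := fun j => (Nat.add_sub_cancel' (ha0 j)).symm
    set g : ℝ → ℝ := fun t => ∑ j, c j * t ^ e j with hg
    have hgroot : ∀ i, g (r i) = 0 := by
      intro i
      have h1 : r i ^ a 0 * g (r i) = 0 := by
        rw [hg, Finset.mul_sum, ← hroot i]
        refine Finset.sum_congr rfl fun j _ => ?_
        rw [hae j, pow_add]; ring
      rcases mul_eq_zero.1 h1 with h | h
      · exact absurd h (pow_ne_zero _ (hrpos i).ne')
      · exact h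
    set g' : ℝ → ℝ := fun t => ∑ j, c j * ((e j : ℝ) * t ^ (e j - 1)) with hg'
    have hderiv : ∀ t, HasDerivAt g (g' t) t := by
      intro t
      exact HasDerivAt.fun_sum fun j _ => (hasDerivAt_pow (e j) t).const_mul (c j)
    have key : ∀ i : Fin m, ∃ s, r i.castSucc < s ∧ s < r i.succ ∧ g' s = 0 := by
      intro i
      have hlt : r i.castSucc < r i.succ := hr (Fin.castSucc_lt_succ (i := i))
      obtain ⟨s, hs, hs0⟩ := exists_hasDerivAt_eq_zero hlt
        (fun t _ => (hderiv t).continuousAt.continuousWithinAt)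
        (by rw [hgroot, hgroot]) (fun t _ => hderiv t)
      exact ⟨s, hs.1, hs.2, hs0⟩
    choose s hs1 hs2 hs0 using key
    have hepos : ∀ j : Fin m, 1 ≤ e j.succ := by
      intro j
      have : a 0 < a j.succ := ha (Fin.succ_pos j)
      show 1 ≤ a j.succ - a 0
      omega
    have hcs : ∀ j : Fin m, c j.succ * (e j.succ : ℝ) = 0 := by
      refine ih (fun j => e j.succ - 1) (fun j => c j.succ * (e j.succ : ℝ)) s
        ?_ ?_ ?_ ?_
      · intro i j hij
        have h1 : a i.succ < a j.succ := ha (Fin.succ_lt_succ_iff.mpr hij)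
        have h2 : a 0 < a i.succ := ha (Fin.succ_pos i)
        show a i.succ - a 0 - 1 < a j.succ - a 0 - 1
        omega
      · intro i j hij
        have h2 : r i.succ ≤ r j.castSucc := by
          apply hr.monotone
          rw [Fin.lt_def] at hij
          rw [Fin.le_def]
          simp only [Fin.val_succ, Fin.coe_castSucc]
          omega
        exact lt_of_lt_of_le (hs2 i) (lt_of_le_of_lt h2 (hs1 j)).le
      · intro i; exact lt_trans (hrpos _) (hs1 i)
      · intro i
        have h0 : ∑ j : Fin (m+1), c j * ((e j : ℝ) * s i ^ (e j - 1)) = 0 := hs0 i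
        rw [Fin.sum_univ_succ] at h0
        have he0 : e 0 = 0 := by simp [he]
        rw [he0] at h0
        simp only [Nat.cast_zero, zero_mul, mul_zero, zero_add] at h0
        rw [← h0]
        refine Finset.sum_congr rfl fun j _ => ?_
        ring
    have hcsucc : ∀ j : Fin m, c j.succ = 0 := by
      intro j
      have h2 : (e j.succ : ℝ) ≠ 0 := by
        have := hepos j; positivity
      have := hcs j
      exact (mul_eq_zero.1 this).resolve_right h2
    have hc0 : c 0 = 0 := by
      have h := hroot 0
      rw [Fin.sum_univ_succ] at h
      simp only [hcsucc, zero_mul, Finset.sum_const_zero, add_zero] at h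
      have : r 0 ^ a 0 ≠ 0 := pow_ne_zero _ (hrpos 0).ne'
      exact (mul_eq_zero.1 h).resolve_right this
    intro j
    rcases Fin.eq_zero_or_eq_succ j with rfl | ⟨i, rfl⟩
    · exact hc0
    · exact hcsucc i

lemma genVandermonde_pos : ∀ (k : ℕ) (x : Fin k → ℝ) (a : Fin k → ℕ),
    (∀ i, 0 < x i) → StrictMono x → StrictMono a →
    0 < Matrix.det (Matrix.of fun i j => x i ^ a j) := by
  intro k
  induction k with
  | zero =>
    intro x a _ _ _
    rw [Matrix.det_fin_zero]; norm_num
  | succ k ih =>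
    intro x a hx hxm ham
    set L : Fin (k+1) := Fin.last k with hL
    set D : Fin (k+1) → ℝ := fun j =>
      Matrix.det (Matrix.of fun (p q : Fin k) => x p.castSucc ^ a (j.succAbove q)) with hD
    set c : Fin (k+1) → ℝ := fun j => (-1 : ℝ) ^ (k + (j : ℕ)) * D j with hc
    set F : ℝ → ℝ := fun t => ∑ j, c j * t ^ a j with hFdef
    have hF : ∀ t, Matrix.det (Matrix.of fun i j => (Function.update x L t) i ^ a j) = F t := by
      intro t
      rw [Matrix.det_succ_row _ L]
      refine Finset.sum_congr rfl fun j _ => ?_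
      have h1 : (Matrix.of fun i j => (Function.update x L t) i ^ a j) L j = t ^ a j := by
        simp [Function.update_self]
      have h2 : ((Matrix.of fun i j => (Function.update x L t) i ^ a j).submatrix
          L.succAbove j.succAbove) = Matrix.of fun (p q : Fin k) => x p.castSucc ^ a (j.succAbove q) := by
        ext p q
        simp only [Matrix.submatrix_apply, Matrix.of_apply, hL, Fin.succAbove_last]
        rw [Function.update_of_ne (Fin.castSucc_lt_last p).ne]
      rw [h1, h2, hc]
      simp only [hL, Fin.val_last]
      ring
    -- the top-left minor is positive
    have hDL : 0 < D L := by
      show 0 < Matrix.det (Matrix.of fun (p q : Fin k) => x p.castSucc ^ a (L.succAbove q))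
      have : (Matrix.of fun (p q : Fin k) => x p.castSucc ^ a (L.succAbove q)) =
          Matrix.of fun (p q : Fin k) => (x ∘ Fin.castSucc) p ^ (a ∘ Fin.castSucc) q := by
        ext p q; simp [hL, Fin.succAbove_last]
      rw [this]
      exact ih (x ∘ Fin.castSucc) (a ∘ Fin.castSucc) (fun i => hx _)
        (hxm.comp Fin.strictMono_castSucc) (ham.comp Fin.strictMono_castSucc)
    have hcL : 0 < c L := by
      rw [hc]
      simp only [hL, Fin.val_last]
      have : (-1 : ℝ) ^ (k + k) = 1 := by
        rw [pow_add, ← mul_pow]; norm_num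
      rw [this, one_mul]
      exact hDL
    have hcont : Continuous F := by
      rw [hFdef]
      exact continuous_finset_sum _ fun j _ => (continuous_const.mul (continuous_pow (a j)))
    have hFroot : ∀ p : Fin k, F (x p.castSucc) = 0 := by
      intro p
      rw [← hF]
      apply Matrix.det_zero_of_row_eq (i := p.castSucc) (j := L) (Fin.castSucc_lt_last p).ne
      funext j
      simp only [Matrix.of_apply]
      rw [Function.update_of_ne (Fin.castSucc_lt_last p).ne, Function.update_self]
    have hFlast : F (x L) = Matrix.det (Matrix.of fun i j => x i ^ a j) := by
      rw [← hF (x L), Function.update_eq_self]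
    by_contra hcon
    push_neg at hcon
    -- find a root ρ ≥ x L of F
    have hexρ : ∃ ρ, x L ≤ ρ ∧ F ρ = 0 := by
      rcases eq_or_lt_of_le hcon with heq | hlt
      · exact ⟨x L, le_refl _, by rw [hFlast, ← heq]⟩
      · -- find T > x L with 0 < F T
        set S : ℝ := ∑ j ∈ Finset.univ.erase L, |c j| with hS
        have hS0 : 0 ≤ S := Finset.sum_nonneg fun j _ => abs_nonneg _
        set T : ℝ := x L + 1 + S / c L with hT
        have hT1 : 1 ≤ T := by
          have := div_nonneg hS0 hcL.le
          have := hx L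
          rw [hT]; linarith
        have hTgt : x L < T := by
          have := div_nonneg hS0 hcL.le
          rw [hT]; linarith
        have haj : ∀ j : Fin (k+1), j ≠ L → a j ≤ a L - 1 := by
          intro j hj
          have : j < L := lt_of_le_of_ne (Fin.le_last j) hj
          have := ham this
          omega
        have hFT : 0 < F T := by
          have hsplit : F T = c L * T ^ a L + ∑ j ∈ Finset.univ.erase L, c j * T ^ a j := by
            rw [hFdef]
            exact (Finset.add_sum_erase _ _ (Finset.mem_univ L)).symm
          have hbound : ∀ j ∈ Finset.univ.erase L, -(|c j| * T ^ (a L - 1)) ≤ c j * T ^ a j := by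
            intro j hj
            have hjL : j ≠ L := (Finset.mem_erase.1 hj).1
            have h1 : T ^ a j ≤ T ^ (a L - 1) :=
              pow_le_pow_right₀ hT1 (haj j hjL)
            have hTp : (0:ℝ) < T := lt_of_lt_of_le one_pos hT1
            calc -(|c j| * T ^ (a L - 1)) ≤ -(|c j| * T ^ a j) := by
                  have := mul_le_mul_of_nonneg_left h1 (abs_nonneg (c j))
                  linarith
              _ ≤ c j * T ^ a j := by
                  have := neg_abs_le (c j)
                  nlinarith [pow_pos hTp (a j)]
          have hsum : -(S * T ^ (a L - 1)) ≤ ∑ j ∈ Finset.univ.erase L, c j * T ^ a j := by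
            rw [hS, Finset.sum_mul, ← Finset.sum_neg_distrib]
            exact Finset.sum_le_sum hbound
          have hkey : 0 < c L * T ^ a L - S * T ^ (a L - 1) := by
            rcases Nat.eq_zero_or_pos (a L) with h0 | hpos
            · -- then k = 0 and S = 0
              have hk0 : k = 0 := by
                by_contra hk
                have : (0 : Fin (k+1)) < L := by
                  rw [hL, Fin.lt_def]; simp [Fin.val_last]; omega
                have := ham this
                omega
              have hSz : S = 0 := by
                rw [hS]
                apply Finset.sum_eq_zero
                intro j hj
                exfalso
                subst hk0
                exact (Finset.mem_erase.1 hj).1 (Fin.ext (by omega))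
              rw [hSz, h0]
              simpa using hcL
            · have hTp : (0:ℝ) < T := lt_of_lt_of_le one_pos hT1
              have hpow : T ^ a L = T ^ (a L - 1) * T := by
                rw [← pow_succ]; congr 1; omega
              have hclT : S < c L * T := by
                have h1 : c L * (S / c L) = S := mul_div_cancel₀ S hcL.ne'
                have h2 : 0 < c L * (x L + 1) := mul_pos hcL (by have := hx L; linarith)
                rw [hT]
                nlinarith
              rw [hpow]
              have := pow_pos hTp (a L - 1)
              nlinarith
          linarith [hsplit, hsum, hkey]
        have hmem : (0:ℝ) ∈ Ioo (F (x L)) (F T) := ⟨by rw [hFlast]; exact hlt, hFT⟩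
        obtain ⟨ρ, hρmem, hρ⟩ := intermediate_value_Ioo hTgt.le hcont.continuousOn hmem
        exact ⟨ρ, hρmem.1.le, hρ⟩
    obtain ⟨ρ, hρge, hFρ⟩ := hexρ
    set r : Fin (k+1) → ℝ := Function.update x L ρ with hr
    have hrL : r L = ρ := by rw [hr]; exact Function.update_self _ _ _
    have hrne : ∀ i : Fin (k+1), i ≠ L → r i = x i := by
      intro i hi; rw [hr]; exact Function.update_of_ne hi _ _
    have hlast_le : ∀ i : Fin (k+1), i ≠ L → x i < ρ := by
      intro i hi
      have : i < L := lt_of_le_of_ne (Fin.le_last i) hi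
      exact lt_of_lt_of_le (hxm this) hρge
    have hrmono : StrictMono r := by
      intro i j hij
      have hiL : i ≠ L := by
        intro h; subst h
        exact absurd hij (not_lt.2 (Fin.le_last j))
      rw [hrne i hiL]
      rcases eq_or_ne j L with rfl | hjL
      · rw [hrL]; exact hlast_le i hiL
      · rw [hrne j hjL]; exact hxm hij
    have hrpos : ∀ i, 0 < r i := by
      intro i
      rcases eq_or_ne i L with rfl | hiL
      · rw [hrL]; exact lt_of_lt_of_le (hx L) hρge
      · rw [hrne i hiL]; exact hx i
    have hroot : ∀ i, ∑ j, c j * r i ^ a j = 0 := by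
      intro i
      rcases eq_or_ne i L with rfl | hiL
      · rw [hrL]; exact hFρ
      · rw [hrne i hiL]
        obtain ⟨p, rfl⟩ := Fin.exists_castSucc_eq.mpr hiL
        exact hFroot p
    have := expPoly_coeffs_zero (k+1) a c r ham hrmono hrpos hroot L
    rw [this] at hcL
    exact lt_irrefl 0 hcL

/-- A matrix is totally nonnegative if every minor is nonnegative. -/
def TotallyNonneg {n : ℕ} (A : Matrix (Fin n) (Fin n) ℝ) : Prop :=
  ∀ (k : ℕ) (f g : Fin k → Fin n), StrictMono f → StrictMono g →
    0 ≤ ((A.submatrix f g).det)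

theorem vandermonde_totallyNonneg (n : ℕ) (x : Fin n → ℝ)
    (hnonneg : ∀ i, 0 ≤ x i) (hmono : Monotone x) :
    TotallyNonneg (Matrix.vandermonde x) := by
  intro k f g hf hg
  have hsub : (Matrix.vandermonde x).submatrix f g =
      Matrix.of fun i j => x (f i) ^ ((g j : ℕ)) := by
    ext i j
    simp [Matrix.vandermonde, Matrix.submatrix]
  rw [hsub]
  set G : ℝ → ℝ := fun ε =>
    Matrix.det (Matrix.of fun i j => (x (f i) + ε * ((i:ℕ)+1)) ^ ((g j : ℕ))) with hG
  have hG0 : G 0 = Matrix.det (Matrix.of fun i j => x (f i) ^ ((g j : ℕ))) := by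
    rw [hG]; simp
  have hGcont : Continuous G := by
    rw [hG]
    apply Continuous.matrix_det
    apply continuous_matrix
    intro i j
    exact (continuous_const.add (continuous_id.mul continuous_const)).pow _
  have hGpos : ∀ ε ∈ Ioi (0:ℝ), 0 ≤ G ε := by
    intro ε hε
    simp only [Set.mem_Ioi] at hε
    apply le_of_lt
    apply genVandermonde_pos k (fun i => x (f i) + ε * ((i:ℕ)+1)) (fun j => (g j : ℕ))
    · intro i
      have h1 := hnonneg (f i)
      have h2 : (0:ℝ) < ε * ((i:ℕ)+1) := mul_pos hε (by positivity)
      linarith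
    · intro i j hij
      have h1 : x (f i) ≤ x (f j) := hmono (hf.monotone hij.le)
      have h2 : ((i:ℕ):ℝ) < ((j:ℕ):ℝ) := by exact_mod_cast (Fin.lt_def.1 hij)
      have h3 : ε * ((i:ℕ)+1) < ε * ((j:ℕ)+1) := mul_lt_mul_of_pos_left (by linarith) hε
      dsimp only
      linarith
    · intro i j hij
      exact Fin.lt_def.1 (hg hij)
  rw [← hG0]
  exact ge_of_tendsto ((hGcont.tendsto 0).mono_left nhdsWithin_le_nhds)
    (eventually_nhdsWithin_of_forall hGpos)
end

section
/- Every minor of a Cauchy matrix C with entries C_{ij} = 1/(x_i + y_j), where 0 < x_1 < ... < x_n and 0 < y_1 < ... < y_n, is positive; hence C is strictly totally positive. -/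
open Matrix Finset

/-- Positivity of the determinant of a Cauchy matrix with strictly increasing nodes
whose pairwise sums are positive. -/
lemma cauchy_det_pos : ∀ (k : ℕ) (u v : Fin k → ℝ),
    (∀ i j, 0 < u i + v j) → StrictMono u → StrictMono v →
    0 < (Matrix.of fun i j => 1 / (u i + v j)).det := by
  intro k
  induction k with
  | zero =>
    intro u v _ _ _
    simp [Matrix.det_fin_zero]
  | succ k ih =>
    intro u v hpos hu hv
    have hne : ∀ i j, u i + v j ≠ 0 := fun i j => (hpos i j).ne'
    -- B : result of subtracting first row suitably
    set B : Matrix (Fin (k+1)) (Fin (k+1)) ℝ :=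
      Matrix.of (fun i j => if i = 0 then 1 / (u 0 + v j)
        else (u 0 - u i) * (1 / ((u i + v j) * (u 0 + v j)))) with hB
    have h1 : (Matrix.of fun i j => 1 / (u i + v j)).det = B.det := by
      apply Matrix.det_eq_of_forall_row_eq_smul_add_const
        (fun i => if i = 0 then 0 else 1) 0 (by simp)
      intro i j
      by_cases hi : i = 0
      · simp [hB, hi]
      · simp only [Matrix.of_apply, hB, if_neg hi]
        have h1 := hne i j
        have h2 := hne 0 j
        simp only [eq_self_iff_true, if_true]
        field_simp
        ring
    -- factor rows and columns of B
    set r : Fin (k+1) → ℝ := fun i => if i = 0 then 1 else u 0 - u i with hr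
    set M : Matrix (Fin (k+1)) (Fin (k+1)) ℝ :=
      Matrix.of (fun i j => if i = 0 then 1 else 1 / (u i + v j)) with hM
    have h2 : B = Matrix.of (fun i j => (1 / (u 0 + v j)) *
        ((Matrix.of fun i j => r i * M i j) i j)) := by
      ext i j
      by_cases hi : i = 0 <;>
        simp [hB, hr, hM, hi, mul_comm, mul_assoc, mul_left_comm, one_div, mul_inv]
    have h3 : B.det = (∏ j, 1 / (u 0 + v j)) * ((∏ i, r i) * M.det) := by
      rw [h2, Matrix.det_mul_row, Matrix.det_mul_column]
    -- column operations on M : subtract first column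
    set N : Matrix (Fin (k+1)) (Fin (k+1)) ℝ :=
      Matrix.of (fun i j => if i = 0 then (if j = 0 then (1:ℝ) else 0)
        else if j = 0 then 1 / (u i + v 0)
        else (v 0 - v j) * (1 / ((u i + v j) * (u i + v 0)))) with hN
    have h4 : M.det = N.det := by
      rw [← Matrix.det_transpose M, ← Matrix.det_transpose N]
      apply Matrix.det_eq_of_forall_row_eq_smul_add_const
        (fun j => if j = 0 then 0 else 1) 0 (by simp)
      intro j i
      simp only [Matrix.transpose_apply, hM, hN, Matrix.of_apply]
      by_cases hi : i = 0
      · by_cases hj : j = 0 <;> simp [hi, hj]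
      · by_cases hj : j = 0
        · simp [hi, hj]
        · simp only [if_neg hi, if_neg hj]
          have h1 := hne i j
          have h2 := hne i 0
          simp only [eq_self_iff_true, if_true]
          field_simp
          ring
    -- expand along the first row of N
    have h5 : N.det = (N.submatrix Fin.succ Fin.succ).det := by
      rw [Matrix.det_succ_row_zero]
      rw [Finset.sum_eq_single 0]
      · simp [hN, Fin.succAbove_zero]
      · intro j _ hj
        simp [hN, hj]
      · simp
    -- factor the remaining matrix
    set C : Matrix (Fin k) (Fin k) ℝ :=
      Matrix.of (fun i j : Fin k => 1 / (u i.succ + v j.succ)) with hC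
    have h6 : N.submatrix Fin.succ Fin.succ = Matrix.of (fun i j =>
        (1 / (u i.succ + v 0)) * ((Matrix.of fun i j => (v 0 - v j.succ) * C i j) i j)) := by
      ext i j
      have : (Fin.succ i : Fin (k+1)) ≠ 0 := Fin.succ_ne_zero i
      have : (Fin.succ j : Fin (k+1)) ≠ 0 := Fin.succ_ne_zero j
      simp [hN, hC, Fin.succ_ne_zero, mul_comm, mul_assoc, mul_left_comm, one_div, mul_inv]
    have h7 : (N.submatrix Fin.succ Fin.succ).det =
        (∏ i : Fin k, 1 / (u i.succ + v 0)) * ((∏ j : Fin k, (v 0 - v j.succ)) * C.det) := by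
      rw [h6, Matrix.det_mul_column, Matrix.det_mul_row]
    -- inductive hypothesis
    have hCpos : 0 < C.det :=
      ih (u ∘ Fin.succ) (v ∘ Fin.succ) (fun i j => hpos i.succ j.succ)
        (hu.comp Fin.strictMono_succ) (hv.comp Fin.strictMono_succ)
    -- positivity of the scalar factors
    have hP1 : 0 < ∏ j, 1 / (u 0 + v j) :=
      Finset.prod_pos fun j _ => one_div_pos.mpr (hpos 0 j)
    have hP3 : 0 < ∏ i : Fin k, 1 / (u i.succ + v 0) :=
      Finset.prod_pos fun i _ => one_div_pos.mpr (hpos i.succ 0)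
    have hr0 : (∏ i, r i) = ∏ i : Fin k, (u 0 - u i.succ) := by
      rw [Fin.prod_univ_succ]
      simp [hr, Fin.succ_ne_zero]
    have hP24 : 0 < (∏ i : Fin k, (u 0 - u i.succ)) * (∏ j : Fin k, (v 0 - v j.succ)) := by
      rw [← Finset.prod_mul_distrib]
      apply Finset.prod_pos
      intro i _
      exact mul_pos_of_neg_of_neg (sub_neg.mpr (hu (Fin.succ_pos i)))
        (sub_neg.mpr (hv (Fin.succ_pos i)))
    rw [h1, h3, h4, h5, h7, hr0]
    have : (∏ j, 1 / (u 0 + v j)) * ((∏ i : Fin k, (u 0 - u i.succ)) *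
        ((∏ i : Fin k, 1 / (u i.succ + v 0)) * ((∏ j : Fin k, (v 0 - v j.succ)) * C.det)))
        = ((∏ j, 1 / (u 0 + v j)) * (∏ i : Fin k, 1 / (u i.succ + v 0))) *
          (((∏ i : Fin k, (u 0 - u i.succ)) * (∏ j : Fin k, (v 0 - v j.succ))) * C.det) := by
      ring
    rw [this]
    exact mul_pos (mul_pos hP1 hP3) (mul_pos hP24 hCpos)

theorem cauchy_strictlyTotallyPositive (n : ℕ) (x y : Fin n → ℝ)
    (hx : ∀ i, 0 < x i) (hy : ∀ j, 0 < y j)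
    (hxm : StrictMono x) (hym : StrictMono y) :
    StrictlyTotallyPositive (Matrix.of fun i j : Fin n => 1 / (x i + y j)) := by
  intro k f g hf hg
  have : (Matrix.of fun i j : Fin n => 1 / (x i + y j)).submatrix f g =
      Matrix.of (fun i j : Fin k => 1 / ((x ∘ f) i + (y ∘ g) j)) := rfl
  rw [this]
  exact cauchy_det_pos k (x ∘ f) (y ∘ g)
    (fun i j => add_pos (hx (f i)) (hy (g j))) (hxm.comp hf) (hym.comp hg)
end

section
/- The Hilbert matrix H_n with entries H_{ij} = 1/(i + j - 1) is strictly totally positive (all its minors are positive). -/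
open Finset Matrix

namespace Matrix

theorem det_eq_mul_det_submatrix_succ {R : Type*} [CommRing R] {n : ℕ}
    (A : Matrix (Fin (n + 1)) (Fin (n + 1)) R)
    (h : ∀ i : Fin n, A i.succ 0 = 0) : A.det = A 0 0 * (A.submatrix Fin.succ Fin.succ).det := by
  simp [det_succ_column_zero A, Fin.sum_univ_succ, h]

end Matrix

section Cauchy

variable {K : Type*} [Field K]

def cauchyMatrix {ι κ : Type*} (x : ι → K) (y : κ → K) : Matrix ι κ K :=
  of fun i j => (x i + y j)⁻¹

@[simp]
theorem cauchyMatrix_apply {ι κ : Type*} (x : ι → K) (y : κ → K) (i : ι) (j : κ) :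
    cauchyMatrix x y i j = (x i + y j)⁻¹ := rfl

theorem cauchyMatrix_submatrix {ι κ ι' κ' : Type*} (x : ι → K) (y : κ → K) (f : ι' → ι)
    (g : κ' → κ) : (cauchyMatrix x y).submatrix f g = cauchyMatrix (x ∘ f) (y ∘ g) := rfl

theorem det_cauchyMatrix_succ {n : ℕ} (x y : Fin (n + 1) → K) (h : ∀ i j, x i + y j ≠ 0) :
    (cauchyMatrix x y).det = (x 0 + y 0)⁻¹ *
      ((∏ i : Fin n, (x i.succ - x 0) / (x i.succ + y 0)) *
        ((∏ j : Fin n, (y j.succ - y 0) / (x 0 + y j.succ)) *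
          (cauchyMatrix (x ∘ Fin.succ) (y ∘ Fin.succ)).det)) := by
  let c : Fin (n + 1) → K := Fin.cons 0 fun i => (x 0 + y 0) / (x i.succ + y 0)
  let B : Matrix (Fin (n + 1)) (Fin (n + 1)) K :=
    of fun i j => cauchyMatrix x y i j - c i * cauchyMatrix x y 0 j
  have hB : (cauchyMatrix x y).det = B.det :=
    det_eq_of_forall_row_eq_smul_add_const c 0 rfl fun i j => by simp [B, c]
  have hB_col : ∀ i : Fin n, B i.succ 0 = 0 := fun i => by
    have := h i.succ 0
    have := h 0 0
    simp only [cauchyMatrix_apply, of_apply, Fin.cons_succ, B, c]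
    field_simp
    ring
  have hB_minor : (B.submatrix Fin.succ Fin.succ).det =
      (∏ i : Fin n, (x i.succ - x 0) / (x i.succ + y 0)) *
        ((∏ j : Fin n, (y j.succ - y 0) / (x 0 + y j.succ)) *
          (cauchyMatrix (x ∘ Fin.succ) (y ∘ Fin.succ)).det) := by
    rw [← det_mul_row, ← det_mul_column]
    congr 1
    ext i j
    have := h i.succ 0
    have := h 0 j.succ
    have := h i.succ j.succ
    simp only [cauchyMatrix_apply, submatrix_apply, of_apply, Fin.cons_succ, Function.comp_apply,
      B, c]
    field_simp
    ring
  have hB_corner : B 0 0 = (x 0 + y 0)⁻¹ := by simp [B, c]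
  rw [hB, det_eq_mul_det_submatrix_succ B hB_col, hB_corner, hB_minor]

variable [LinearOrder K] [IsStrictOrderedRing K]

theorem det_cauchyMatrix_pos {n : ℕ} {x y : Fin n → K} (hx : StrictMono x) (hy : StrictMono y)
    (hpos : ∀ i j, 0 < x i + y j) : 0 < (cauchyMatrix x y).det := by
  induction n with
  | zero => simp
  | succ n ih =>
    rw [det_cauchyMatrix_succ x y fun i j => (hpos i j).ne']
    have hrow : ∀ i : Fin n, 0 < (x i.succ - x 0) / (x i.succ + y 0) := fun i =>
      div_pos (sub_pos.2 (hx i.succ_pos)) (hpos _ _)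
    have hcol : ∀ j : Fin n, 0 < (y j.succ - y 0) / (x 0 + y j.succ) := fun j =>
      div_pos (sub_pos.2 (hy j.succ_pos)) (hpos _ _)
    have hminor :=
      ih (hx.comp Fin.strictMono_succ) (hy.comp Fin.strictMono_succ) fun _ _ => hpos _ _
    exact mul_pos (inv_pos.2 (hpos 0 0)) <|
      mul_pos (prod_pos fun i _ => hrow i) (mul_pos (prod_pos fun j _ => hcol j) hminor)

end Cauchy

theorem strictlyTotallyPositive_cauchyMatrix {n : ℕ} {x y : Fin n → ℝ} (hx : StrictMono x)
    (hy : StrictMono y) (hpos : ∀ i j, 0 < x i + y j) :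
    StrictlyTotallyPositive (cauchyMatrix x y) := by
  intro k f g hf hg
  rw [cauchyMatrix_submatrix]
  exact det_cauchyMatrix_pos (hx.comp hf) (hy.comp hg) fun _ _ => hpos _ _

theorem hilbert_strictlyTotallyPositive (n : ℕ) :
    StrictlyTotallyPositive
      (Matrix.of fun i j : Fin n => (1 : ℝ) / ((i : ℕ) + (j : ℕ) + 1)) := by
  have hilbert_eq : (Matrix.of fun i j : Fin n => (1 : ℝ) / ((i : ℕ) + (j : ℕ) + 1)) =
      cauchyMatrix (fun i : Fin n => ((i : ℕ) : ℝ)) (fun j : Fin n => ((j : ℕ) : ℝ) + 1) := by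
    ext
    simp [add_assoc]
  have hval : StrictMono fun i : Fin n => ((i : ℕ) : ℝ) :=
    Nat.strictMono_cast.comp Fin.val_strictMono
  rw [hilbert_eq]
  exact strictlyTotallyPositive_cauchyMatrix hval (hval.add_const 1) fun i j => by positivity
end

section
/- The lower triangular Pascal matrix L_n with entries (L_n)_{ij} = binom(i-1, j-1) is totally nonnegative. -/
open Matrix

theorem StrictMono.update_of_covBy {α β : Type*} [Preorder α] [LinearOrder β] [DecidableEq α]
    {g : α → β} (hg : StrictMono g) {q : α} {b : β} (hb : g q ⋖ b) (hbg : b ∉ Set.range g) :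
    StrictMono (Function.update g q b) := by
  intro x y hxy
  simp only [Function.update_apply]
  split_ifs with hx hy hy
  · subst hx hy
    exact absurd hxy (lt_irrefl _)
  · subst hx
    exact (hb.ge_of_gt (hg hxy)).lt_of_ne fun h => hbg ⟨y, h.symm⟩
  · subst hy
    exact (hg hxy).trans hb.lt
  · exact hg hxy

namespace TotallyNonneg

variable {n : ℕ}

theorem of_fin_zero (M : Matrix (Fin 0) (Fin 0) ℝ) : TotallyNonneg M := by
  intro k f _ _ _
  cases k with
  | zero => simp
  | succ k => exact (f 0).elim0

theorem updateCol_add_mul_of_covBy {M : Matrix (Fin n) (Fin n) ℝ} (hM : TotallyNonneg M)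
    {j j' : Fin n} (hj : j ⋖ j') {c : ℝ} (hc : 0 ≤ c) :
    TotallyNonneg (M.updateCol j fun i => M i j + c * M i j') := by
  intro k f g hf hg
  by_cases hjg : j ∈ Set.range g
  swap
  · have hsub : (M.updateCol j fun i => M i j + c * M i j').submatrix f g = M.submatrix f g := by
      ext p q
      simp [updateCol_ne fun h => hjg ⟨q, h⟩]
    rw [hsub]
    exact hM k f g hf hg
  obtain ⟨q, rfl⟩ := hjg
  have hsub : (M.updateCol (g q) fun i => M i (g q) + c * M i j').submatrix f g =
      (M.submatrix f g).updateCol q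
        ((fun p => M.submatrix f g p q) + c • fun p => M (f p) j') := by
    ext p q'
    by_cases h : q' = q
    · subst h
      simp
    · simp [h, hg.injective.ne h]
  have hshifted : 0 ≤ ((M.submatrix f g).updateCol q fun p => M (f p) j').det := by
    by_cases hj'g : j' ∈ Set.range g
    · obtain ⟨q', hq'⟩ := hj'g
      have hqq' : q ≠ q' := fun h => hj.ne (by rw [h, hq'])
      rw [det_zero_of_column_eq hqq' fun p => by simp [hqq'.symm, hq']]
    · have hupd : (M.submatrix f g).updateCol q (fun p => M (f p) j') =
          M.submatrix f (Function.update g q j') := by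
        ext p q'
        by_cases h : q' = q <;> simp [h]
      rw [hupd]
      exact hM k f _ hf (hg.update_of_covBy hj hj'g)
  rw [hsub, det_updateCol_add, det_updateCol_smul, updateCol_eq_self]
  exact add_nonneg (hM k f g hf hg) (mul_nonneg hc hshifted)

end TotallyNonneg

-- Infinite matrices `ℕ → ℕ → ℝ` keep the index shifts of bordering free of `Fin` arithmetic.
def leadingBlock (n : ℕ) (a : ℕ → ℕ → ℝ) : Matrix (Fin n) (Fin n) ℝ :=
  Matrix.of fun i j => a i j

def addNextCol (a : ℕ → ℕ → ℝ) (i j : ℕ) : ℝ :=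
  a i j + a i (j + 1)

def oneDirectSum (a : ℕ → ℕ → ℝ) : ℕ → ℕ → ℝ
  | 0, 0 => 1
  | 0, _ + 1 => 0
  | _ + 1, 0 => 0
  | i + 1, j + 1 => a i j

theorem oneDirectSum_zero_left (a : ℕ → ℕ → ℝ) (j : ℕ) :
    oneDirectSum a 0 j = if j = 0 then 1 else 0 := by
  cases j <;> rfl

theorem oneDirectSum_zero_right (a : ℕ → ℕ → ℝ) (i : ℕ) :
    oneDirectSum a i 0 = if i = 0 then 1 else 0 := by
  cases i <;> rfl

theorem oneDirectSum_of_ne_zero (a : ℕ → ℕ → ℝ) {i j : ℕ} (hi : i ≠ 0) (hj : j ≠ 0) :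
    oneDirectSum a i j = a (i - 1) (j - 1) := by
  obtain ⟨i, rfl⟩ := Nat.exists_eq_add_one_of_ne_zero hi
  obtain ⟨j, rfl⟩ := Nat.exists_eq_add_one_of_ne_zero hj
  rfl

namespace TotallyNonneg

variable {n : ℕ} {a : ℕ → ℕ → ℝ}

theorem leadingBlock_addNextCol (ha : TotallyNonneg (leadingBlock n a))
    (hlast : ∀ i < n, a i n = 0) : TotallyNonneg (leadingBlock n (addNextCol a)) := by
  -- Columns are updated left to right, so column `t + 1` is still the original one at step `t`.
  have hprefix : ∀ t ≤ n,
      TotallyNonneg (leadingBlock n fun i j => a i j + if j < t then a i (j + 1) else 0) := by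
    intro t ht
    induction t with
    | zero => simpa using ha
    | succ t ih =>
      rcases (Nat.lt_or_eq_of_le ht) with hlt | rfl
      · have hcov : (⟨t, by omega⟩ : Fin n) ⋖ ⟨t + 1, hlt⟩ :=
          ⟨Fin.mk_lt_mk.2 (Nat.lt_succ_self t), fun c h1 h2 => by
            simp only [Fin.lt_def] at h1 h2
            omega⟩
        convert (ih (by omega)).updateCol_add_mul_of_covBy hcov zero_le_one using 1
        ext i j
        by_cases hj : (j : ℕ) = t <;>
          simp [leadingBlock, updateCol_apply, Fin.ext_iff, Nat.le_iff_lt_or_eq, hj]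
      · -- The last column `n - 1` receives column `n`, which vanishes on the block.
        convert ih (by omega) using 1
        ext i j
        by_cases hj : (j : ℕ) = t <;>
          simp [leadingBlock, Nat.le_iff_lt_or_eq, hj, hlast i (by omega)]
  simpa [addNextCol, leadingBlock] using hprefix n le_rfl

theorem leadingBlock_oneDirectSum (ha : TotallyNonneg (leadingBlock n a)) :
    TotallyNonneg (leadingBlock (n + 1) (oneDirectSum a)) := by
  set A := leadingBlock (n + 1) (oneDirectSum a)
  have hA_zero_left (j : Fin (n + 1)) (hj : j ≠ 0) : A 0 j = 0 := by
    simp [A, leadingBlock, oneDirectSum_zero_left, Fin.val_ne_zero_iff.2 hj]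
  have hA_zero_right (i : Fin (n + 1)) (hi : i ≠ 0) : A i 0 = 0 := by
    simp [A, leadingBlock, oneDirectSum_zero_right, Fin.val_ne_zero_iff.2 hi]
  have h_avoid_zero {k : ℕ} (f g : Fin k → Fin (n + 1)) (hf : StrictMono f) (hg : StrictMono g)
      (hf0 : ∀ p, f p ≠ 0) (hg0 : ∀ q, g q ≠ 0) : 0 ≤ (A.submatrix f g).det := by
    have hsub : A.submatrix f g =
        (leadingBlock n a).submatrix (fun p => (f p).pred (hf0 p))
          (fun q => (g q).pred (hg0 q)) := by
      ext p q
      simp [A, leadingBlock, Fin.val_pred, oneDirectSum_of_ne_zero, hf0 p, hg0 q]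
    rw [hsub]
    exact ha k _ _ (fun p p' h => Fin.pred_lt_pred_iff.2 (hf h))
      (fun q q' h => Fin.pred_lt_pred_iff.2 (hg h))
  intro k f g hf hg
  cases k with
  | zero => simp
  | succ k =>
    have h_of_head {h : Fin (k + 1) → Fin (n + 1)} (hh : StrictMono h) (h0 : h 0 ≠ 0) (p) :
        h p ≠ 0 := fun hp => h0 (le_antisymm (hp ▸ hh.monotone (Fin.zero_le p)) (Fin.zero_le _))
    by_cases hf0 : f 0 = 0 <;> by_cases hg0 : g 0 = 0
    · have h_tail_ne (h : Fin (k + 1) → Fin (n + 1)) (hh : StrictMono h) (h0 : h 0 = 0)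
          (p : Fin k) : h p.succ ≠ 0 := h0 ▸ hh.injective.ne (Fin.succ_ne_zero p)
      have h_corner : A 0 0 = 1 := rfl
      rw [det_succ_row_zero, Fin.sum_univ_succ]
      simp only [submatrix_apply, hf0, hg0, h_corner, hA_zero_left _ (h_tail_ne g hg hg0 _)]
      simp only [Fin.val_zero, pow_zero, mul_one, one_mul, mul_zero, zero_mul,
        Finset.sum_const_zero, add_zero, submatrix_submatrix, Fin.succAbove_zero]
      exact h_avoid_zero _ _ (hf.comp Fin.strictMono_succ) (hg.comp Fin.strictMono_succ)
        (h_tail_ne f hf hf0) (h_tail_ne g hg hg0)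
    · rw [det_eq_zero_of_row_eq_zero 0 fun q => by
        simpa [hf0] using hA_zero_left _ (h_of_head hg hg0 q)]
    · rw [det_eq_zero_of_column_eq_zero 0 fun p => by
        simpa [hg0] using hA_zero_right _ (h_of_head hf hf0 p)]
    · exact h_avoid_zero f g hf hg (h_of_head hf hf0) (h_of_head hg hg0)

end TotallyNonneg

def pascal (i j : ℕ) : ℝ :=
  i.choose j

theorem pascal_eq_addNextCol_oneDirectSum : pascal = addNextCol (oneDirectSum pascal) := by
  ext i j
  cases i <;> cases j <;> simp [pascal, addNextCol, oneDirectSum, Nat.choose_succ_succ]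

theorem oneDirectSum_pascal_eq_zero_of_lt {i j : ℕ} (h : i < j) :
    oneDirectSum pascal i j = 0 := by
  cases i <;> cases j
  all_goals simp_all [oneDirectSum, pascal, Nat.choose_eq_zero_of_lt]

theorem lowerPascal_totallyNonneg (n : ℕ) :
    TotallyNonneg
      (Matrix.of fun i j : Fin n => (Nat.choose (i : ℕ) (j : ℕ) : ℝ)) := by
  change TotallyNonneg (leadingBlock n pascal)
  induction n with
  | zero => exact .of_fin_zero _
  | succ n ih =>
    rw [pascal_eq_addNextCol_oneDirectSum]
    exact ih.leadingBlock_oneDirectSum.leadingBlock_addNextCol fun i hi =>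
      oneDirectSum_pascal_eq_zero_of_lt hi
end

section
/- The symmetric Pascal matrix P_n is totally nonnegative and positive definite. -/
set_option linter.unreachableTactic false
set_option linter.unusedTactic false

section Aux

open Matrix

/-- Half Cauchy–Binet: expansion of a minor of `D * A` by multilinearity in rows. -/
lemma half_CB_row {n k : ℕ} (D A : Matrix (Fin n) (Fin n) ℝ) (f g : Fin k → Fin n) :
    ((D * A).submatrix f g).det
      = ∑ r : Fin k → Fin n, (∏ i, D (f i) (r i)) * ((A.submatrix r g).det) := by
  have h1 : ((D * A).submatrix f g)
      = Matrix.of (fun i => ∑ t : Fin n, D (f i) t • (fun j : Fin k => A t (g j))) := by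
    ext i j
    simp [Matrix.mul_apply, Finset.sum_apply]
  have h2 := (Matrix.detRowAlternating (R := ℝ) (n := Fin k)).toMultilinearMap.map_sum
    (α := fun _ : Fin k => Fin n) (g := fun i t => D (f i) t • (fun j : Fin k => A t (g j)))
  rw [h1]
  show Matrix.detRowAlternating (fun i => ∑ t : Fin n, D (f i) t • (fun j : Fin k => A t (g j))) = _
  rw [show (Matrix.detRowAlternating (R := ℝ) (n := Fin k))
        (fun i => ∑ t : Fin n, D (f i) t • (fun j : Fin k => A t (g j)))
      = (Matrix.detRowAlternating (R := ℝ) (n := Fin k)).toMultilinearMap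
        (fun i => ∑ t : Fin n, D (f i) t • (fun j : Fin k => A t (g j))) from rfl, h2]
  refine Finset.sum_congr rfl fun r _ => ?_
  rw [(Matrix.detRowAlternating (R := ℝ) (n := Fin k)).toMultilinearMap.map_smul_univ]
  rfl

/-- Half Cauchy–Binet, column version. -/
lemma half_CB_col {n k : ℕ} (A D : Matrix (Fin n) (Fin n) ℝ) (f g : Fin k → Fin n) :
    ((A * D).submatrix f g).det
      = ∑ r : Fin k → Fin n, (∏ j, D (r j) (g j)) * ((A.submatrix f r).det) := by
  have : ((A * D).submatrix f g).det = ((Dᵀ * Aᵀ).submatrix g f).det := by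
    rw [← Matrix.transpose_mul, ← Matrix.transpose_submatrix, Matrix.det_transpose]
  rw [this, half_CB_row]
  refine Finset.sum_congr rfl fun r _ => ?_
  rw [show (Aᵀ.submatrix r f) = (A.submatrix f r)ᵀ from rfl, Matrix.det_transpose]
  rfl

lemma det_nonneg_of_monotone_cols {n k : ℕ} {A : Matrix (Fin n) (Fin n) ℝ}
    (hA : TotallyNonneg A) {f r : Fin k → Fin n} (hf : StrictMono f) (hr : Monotone r) :
    0 ≤ (A.submatrix f r).det := by
  by_cases hinj : Function.Injective r
  · exact hA k f r hf (hr.strictMono_of_injective hinj)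
  · simp only [Function.Injective, not_forall] at hinj
    obtain ⟨a, b, hab, hne⟩ := hinj
    rw [Matrix.det_zero_of_column_eq hne (fun i => by simp [Matrix.submatrix_apply, hab])]

lemma det_nonneg_of_monotone_rows {n k : ℕ} {A : Matrix (Fin n) (Fin n) ℝ}
    (hA : TotallyNonneg A) {r g : Fin k → Fin n} (hr : Monotone r) (hg : StrictMono g) :
    0 ≤ (A.submatrix r g).det := by
  by_cases hinj : Function.Injective r
  · exact hA k r g (hr.strictMono_of_injective hinj) hg
  · simp only [Function.Injective, not_forall] at hinj
    obtain ⟨a, b, hab, hne⟩ := hinj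
    rw [Matrix.det_zero_of_row_eq hne (by funext j; simp [Matrix.submatrix_apply, hab])]

lemma mono_of_pred {n k : ℕ} {r f : Fin k → Fin n} (hf : StrictMono f)
    (h : ∀ i, (r i : ℕ) = f i ∨ (r i : ℕ) + 1 = f i) : Monotone r := by
  intro i i' hle
  rcases eq_or_lt_of_le hle with h1 | h1
  · exact le_of_eq (by rw [h1])
  · have h2 : (f i : ℕ) < f i' := hf h1
    have h3 := h i
    have h4 := h i'
    rw [Fin.le_def]
    omega

/-- Multiplying a totally nonnegative matrix on the left by a nonnegative lower bidiagonal
matrix preserves total nonnegativity. -/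
lemma step_left_lower {n : ℕ} {D A : Matrix (Fin n) (Fin n) ℝ} (hA : TotallyNonneg A)
    (hD0 : ∀ r c, 0 ≤ D r c)
    (hD : ∀ r c : Fin n, D r c ≠ 0 → (r : ℕ) = c ∨ (r : ℕ) = (c : ℕ) + 1) :
    TotallyNonneg (D * A) := by
  intro k f g hf hg
  rw [half_CB_row]
  refine Finset.sum_nonneg fun r _ => ?_
  by_cases hz : ∀ i, D (f i) (r i) ≠ 0
  · refine mul_nonneg (Finset.prod_nonneg fun i _ => hD0 _ _) ?_
    refine det_nonneg_of_monotone_rows hA ?_ hg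
    exact mono_of_pred hf fun i => by have := hD _ _ (hz i); omega
  · push_neg at hz
    obtain ⟨i, hi⟩ := hz
    rw [Finset.prod_eq_zero (Finset.mem_univ i) hi, zero_mul]

/-- Multiplying a totally nonnegative matrix on the right by a nonnegative upper bidiagonal
matrix preserves total nonnegativity. -/
lemma step_right_upper {n : ℕ} {A D : Matrix (Fin n) (Fin n) ℝ} (hA : TotallyNonneg A)
    (hD0 : ∀ r c, 0 ≤ D r c)
    (hD : ∀ r c : Fin n, D r c ≠ 0 → (r : ℕ) = c ∨ (c : ℕ) = (r : ℕ) + 1) :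
    TotallyNonneg (A * D) := by
  intro k f g hf hg
  rw [half_CB_col]
  refine Finset.sum_nonneg fun r _ => ?_
  by_cases hz : ∀ j, D (r j) (g j) ≠ 0
  · refine mul_nonneg (Finset.prod_nonneg fun j _ => hD0 _ _) ?_
    refine det_nonneg_of_monotone_cols hA hf ?_
    exact mono_of_pred hg fun j => by have := hD _ _ (hz j); omega
  · push_neg at hz
    obtain ⟨j, hj⟩ := hz
    rw [Finset.prod_eq_zero (Finset.mem_univ j) hj, zero_mul]

lemma strictMono_perm_apply {k : ℕ} (σ : Equiv.Perm (Fin k)) (hs : StrictMono σ) (i : Fin k) :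
    σ i = i := by
  let e : Fin k ≃o Fin k := StrictMono.orderIsoOfSurjective σ hs σ.surjective
  have he : e = OrderIso.refl (Fin k) := Subsingleton.elim _ _
  have h2 : e i = σ i := rfl
  rw [he] at h2
  exact h2.symm

lemma totallyNonneg_one {n : ℕ} : TotallyNonneg (1 : Matrix (Fin n) (Fin n) ℝ) := by
  intro k f g hf hg
  rw [Matrix.det_apply]
  rw [Finset.sum_eq_single (1 : Equiv.Perm (Fin k))]
  · simp only [Equiv.Perm.sign_one, one_smul, Equiv.Perm.one_apply]
    exact Finset.prod_nonneg fun i _ => by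
      by_cases h : f i = g i <;> simp [Matrix.submatrix_apply, Matrix.one_apply, h]
  · intro σ _ hσ
    by_cases hall : ∀ i, f (σ i) = g i
    · exfalso
      apply hσ
      have hsm : StrictMono σ := by
        intro a b hab
        have : g a < g b := hg hab
        rw [← hall a, ← hall b] at this
        exact hf.lt_iff_lt.mp this
      ext i
      simp [strictMono_perm_apply σ hsm i]
    · push_neg at hall
      obtain ⟨i, hi⟩ := hall
      have hzero : (1 : Matrix (Fin n) (Fin n) ℝ).submatrix f g (σ i) i = 0 := by
        simp [Matrix.submatrix_apply, Matrix.one_apply, hi]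
      rw [show (∏ i : Fin k, (1 : Matrix (Fin n) (Fin n) ℝ).submatrix f g (σ i) i) = 0 from
        Finset.prod_eq_zero (Finset.mem_univ i) hzero, smul_zero]
  · intro h
    exact absurd (Finset.mem_univ _) h

/-- Entries of the partially reduced lower Pascal matrix. -/
def Anat (s i j : ℕ) : ℕ :=
  if i < s ∨ j < s then (if i = j then 1 else 0) else Nat.choose (i - s) (j - s)

lemma Anat_key {n : ℕ} (s i j : ℕ) (hi : i < n) (hj : j < n) :
    Anat s i j = Anat (s+1) i j + (if j + 1 < n ∧ s ≤ j then Anat (s+1) i (j+1) else 0) := by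
  unfold Anat
  rcases lt_or_ge j s with hjs | hjs
  · have h0 : ¬ (j + 1 < n ∧ s ≤ j) := by omega
    rw [if_neg h0, if_pos (Or.inr hjs), if_pos (Or.inr (show j < s+1 by omega)), add_zero]
  · rcases lt_or_ge i s with his | his
    · rw [if_pos (Or.inl his), if_pos (Or.inl (show i < s+1 by omega)),
        if_neg (show i ≠ j by omega)]
      split_ifs <;> first | omega | (exfalso; omega)
    · rcases eq_or_lt_of_le his with his' | his'
      · have h1 : ¬ (i < s ∨ j < s) := by omega
        rw [if_neg h1, show i - s = 0 by omega]
        rcases eq_or_lt_of_le hjs with hji | hji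
        · rw [show j - s = 0 by omega, Nat.choose_self,
            if_pos (Or.inl (show i < s+1 by omega)), if_pos (show i = j by omega)]
          split_ifs <;> first | omega | (exfalso; omega)
        · rw [Nat.choose_eq_zero_of_lt (show 0 < j - s by omega),
            if_pos (Or.inl (show i < s+1 by omega)), if_neg (show i ≠ j by omega)]
          split_ifs <;> first | omega | (exfalso; omega)
      · have h1 : ¬ (i < s ∨ j < s) := by omega
        rw [if_neg h1]
        rcases eq_or_lt_of_le hjs with hji | hji
        · rw [if_pos (Or.inr (show j < s + 1 by omega)), if_neg (show i ≠ j by omega),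
            if_pos (show j + 1 < n ∧ s ≤ j from ⟨by omega, by omega⟩),
            if_neg (show ¬ (i < s + 1 ∨ j + 1 < s + 1) by omega),
            show j - s = 0 by omega, Nat.choose_zero_right,
            show j + 1 - (s + 1) = 0 by omega, Nat.choose_zero_right]
        · have h2 : ¬ (i < s + 1 ∨ j < s + 1) := by omega
          rw [if_neg h2]
          obtain ⟨a, ha⟩ : ∃ a, i - s = a + 1 := ⟨i - s - 1, by omega⟩
          obtain ⟨b, hb⟩ : ∃ b, j - s = b + 1 := ⟨j - s - 1, by omega⟩
          have ha' : i - (s+1) = a := by omega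
          have hb' : j - (s+1) = b := by omega
          rcases lt_or_ge (j+1) n with hjn | hjn
          · rw [if_pos (show j + 1 < n ∧ s ≤ j from ⟨hjn, hjs⟩),
              if_neg (show ¬ (i < s + 1 ∨ j + 1 < s + 1) by omega)]
            rw [ha, hb, ha', hb', show j + 1 - (s+1) = b + 1 by omega, Nat.choose_succ_succ]
          · rw [if_neg (show ¬ (j + 1 < n ∧ s ≤ j) by omega), add_zero, ha, hb, ha', hb',
              Nat.choose_succ_succ, Nat.choose_eq_zero_of_lt (show a < b + 1 by omega), add_zero]

def Ama (n s : ℕ) : Matrix (Fin n) (Fin n) ℝ :=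
  Matrix.of fun i j => (Anat s i j : ℝ)

def Ema (n s : ℕ) : Matrix (Fin n) (Fin n) ℝ :=
  Matrix.of fun i j =>
    (if i = j then 1 else 0) + (if (i : ℕ) = (j : ℕ) + 1 ∧ s ≤ (j : ℕ) then 1 else 0)

lemma Ema_nonneg (n s : ℕ) (r c : Fin n) : 0 ≤ Ema n s r c := by
  unfold Ema
  dsimp only [Matrix.of_apply]
  split_ifs <;> norm_num

lemma Ema_support (n s : ℕ) (r c : Fin n) (h : Ema n s r c ≠ 0) :
    (r : ℕ) = c ∨ (r : ℕ) = (c : ℕ) + 1 := by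
  unfold Ema at h
  dsimp only [Matrix.of_apply] at h
  split_ifs at h with h1 h2 h2
  · exact Or.inl (by rw [h1])
  · exact Or.inl (by rw [h1])
  · exact Or.inr h2.1
  · simp at h

lemma Astep (n s : ℕ) : Ama n s = Ama n (s+1) * Ema n s := by
  ext i j
  rw [Matrix.mul_apply]
  have hsplit : ∀ t : Fin n, Ama n (s+1) i t * Ema n s t j
      = (if t = j then Ama n (s+1) i t else 0)
        + (if (t : ℕ) = (j : ℕ) + 1 ∧ s ≤ (j : ℕ) then Ama n (s+1) i t else 0) := by
    intro t
    unfold Ema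
    dsimp only [Matrix.of_apply]
    split_ifs <;> ring_nf <;> simp_all <;> omega
  rw [Finset.sum_congr rfl fun t _ => hsplit t, Finset.sum_add_distrib]
  rw [Finset.sum_ite_eq' Finset.univ j (fun t => Ama n (s+1) i t), if_pos (Finset.mem_univ j)]
  have h2 : (∑ t : Fin n, if (t : ℕ) = (j : ℕ) + 1 ∧ s ≤ (j : ℕ) then Ama n (s+1) i t else 0)
      = if h : (j : ℕ) + 1 < n ∧ s ≤ (j : ℕ) then Ama n (s+1) i ⟨(j : ℕ) + 1, h.1⟩ else 0 := by
    split_ifs with h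
    · rw [Finset.sum_eq_single (⟨(j : ℕ) + 1, h.1⟩ : Fin n)]
      · rw [if_pos ⟨rfl, h.2⟩]
      · intro t _ ht
        rw [if_neg (fun hc => ht (Fin.ext hc.1))]
      · intro hc
        exact absurd (Finset.mem_univ _) hc
    · refine Finset.sum_eq_zero fun t _ => if_neg ?_
      rintro ⟨hc1, hc2⟩
      exact h ⟨hc1 ▸ t.isLt, hc2⟩
  rw [h2]
  have hk := Anat_key (n := n) s (i : ℕ) (j : ℕ) i.isLt j.isLt
  show (Anat s i j : ℝ) = _
  rw [hk]
  push_cast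
  congr 1

lemma Ama_top (n : ℕ) : Ama n n = 1 := by
  ext i j
  unfold Ama Anat
  dsimp only [Matrix.of_apply]
  rw [if_pos (Or.inl i.isLt)]
  by_cases h : i = j
  · rw [if_pos (by rw [h]), h, Matrix.one_apply_eq, Nat.cast_one]
  · rw [if_neg (fun hc => h (Fin.ext hc)), Matrix.one_apply_ne h, Nat.cast_zero]

/-- The telescoping product `T s`. -/
def Tma (n : ℕ) : ℕ → Matrix (Fin n) (Fin n) ℝ
  | 0 => 1
  | (s+1) => Ema n s * Tma n s * (Ema n s)ᵀ

lemma Tma_tn (n s : ℕ) : TotallyNonneg (Tma n s) := by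
  induction s with
  | zero => exact totallyNonneg_one
  | succ s ih =>
    show TotallyNonneg (Ema n s * Tma n s * (Ema n s)ᵀ)
    refine step_right_upper ?_ (fun r c => Ema_nonneg n s c r) ?_
    · exact step_left_lower ih (Ema_nonneg n s) (Ema_support n s)
    · intro r c h
      have := Ema_support n s c r h
      omega

lemma Tma_inv (n s : ℕ) :
    Ama n s * Tma n s * (Ama n s)ᵀ = Ama n 0 * (Ama n 0)ᵀ := by
  induction s with
  | zero => rw [show Tma n 0 = 1 from rfl, Matrix.mul_one]
  | succ s ih =>
    have hT : Tma n (s+1) = Ema n s * Tma n s * (Ema n s)ᵀ := rfl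
    rw [hT, ← ih, Astep n s, Matrix.transpose_mul]
    simp only [Matrix.mul_assoc]

lemma vdm (N i j : ℕ) (hi : i < N) :
    ∑ t ∈ Finset.range N, Nat.choose i t * Nat.choose j t = Nat.choose (i + j) i := by
  rw [Nat.add_choose_eq, Finset.Nat.sum_antidiagonal_eq_sum_range_succ_mk]
  have h1 : ∑ k ∈ Finset.range (i + 1), Nat.choose i k * Nat.choose j (i - k)
      = ∑ k ∈ Finset.range (i + 1), Nat.choose i k * Nat.choose j k := by
    rw [← Finset.sum_range_reflect]
    refine Finset.sum_congr rfl fun k hk => ?_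
    rw [Finset.mem_range] at hk
    have hk' : k ≤ i := by omega
    rw [show i + 1 - 1 - k = i - k by omega, Nat.choose_symm hk',
      show i - (i - k) = k by omega]
  rw [h1]
  symm
  refine Finset.sum_subset (by intro x hx; rw [Finset.mem_range] at *; omega) ?_
  intro t _ ht
  rw [Finset.mem_range] at ht
  rw [Nat.choose_eq_zero_of_lt (by omega), zero_mul]

lemma pascal_factor (n : ℕ) :
    (Matrix.of fun i j : Fin n => (Nat.choose ((i : ℕ) + (j : ℕ)) (i : ℕ) : ℝ))
      = Ama n 0 * (Ama n 0)ᵀ := by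
  ext i j
  rw [Matrix.mul_apply]
  have : ∀ t : Fin n, Ama n 0 i t * (Ama n 0)ᵀ t j
      = ((Nat.choose (i : ℕ) (t : ℕ) * Nat.choose (j : ℕ) (t : ℕ) : ℕ) : ℝ) := by
    intro t
    unfold Ama Anat
    dsimp only [Matrix.of_apply, Matrix.transpose_apply]
    rw [if_neg (by omega), if_neg (by omega)]
    push_cast
    simp
  rw [Finset.sum_congr rfl fun t _ => this t]
  rw [← Nat.cast_sum]
  rw [Fin.sum_univ_eq_sum_range (fun t => Nat.choose (i : ℕ) t * Nat.choose (j : ℕ) t) n]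
  rw [vdm n (i : ℕ) (j : ℕ) i.isLt]
  simp

lemma Ama0_det (n : ℕ) : (Ama n 0)ᵀ.det = 1 := by
  rw [Matrix.det_of_upperTriangular]
  · refine Finset.prod_eq_one fun i _ => ?_
    unfold Ama Anat
    dsimp only [Matrix.transpose_apply, Matrix.of_apply]
    rw [if_neg (by omega)]
    simp
  · intro i j hij
    unfold Ama Anat
    dsimp only [Matrix.transpose_apply, Matrix.of_apply]
    rw [if_neg (by omega)]
    have : (j : ℕ) - 0 < (i : ℕ) - 0 := by
      simp only [Nat.sub_zero]
      exact hij
    rw [Nat.choose_eq_zero_of_lt this]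
    simp

lemma pascal_TN (n : ℕ) : TotallyNonneg (Ama n 0 * (Ama n 0)ᵀ) := by
  have h := Tma_tn n n
  have h2 := Tma_inv n n
  rw [Ama_top n, Matrix.transpose_one, Matrix.one_mul, Matrix.mul_one] at h2
  rwa [← h2]

lemma pascal_PD (n : ℕ) : (Ama n 0 * (Ama n 0)ᵀ).PosDef := by
  rw [Matrix.posDef_iff_dotProduct_mulVec]
  constructor
  · rw [show (Ama n 0)ᵀ = (Ama n 0)ᴴ from
      (Matrix.conjTranspose_eq_transpose_of_trivial _).symm]
    exact Matrix.isHermitian_mul_conjTranspose_self (Ama n 0)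
  · intro x hx
    have hy : (Ama n 0)ᵀ *ᵥ x ≠ 0 := by
      intro hc
      apply hx
      have hdet : IsUnit ((Ama n 0)ᵀ).det := by
        rw [Ama0_det n]; exact isUnit_one
      have hinj : Function.Injective ((Ama n 0)ᵀ).mulVec :=
        Matrix.mulVec_injective_iff_isUnit.2 ((Matrix.isUnit_iff_isUnit_det _).2 hdet)
      have : (Ama n 0)ᵀ *ᵥ x = (Ama n 0)ᵀ *ᵥ 0 := by rw [hc, Matrix.mulVec_zero]
      exact hinj this
    set y := (Ama n 0)ᵀ *ᵥ x with hy_def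
    have key : star x ⬝ᵥ ((Ama n 0 * (Ama n 0)ᵀ) *ᵥ x) = y ⬝ᵥ y := by
      rw [show (star x : Fin n → ℝ) = x from rfl]
      rw [← Matrix.mulVec_mulVec, Matrix.dotProduct_mulVec, hy_def,
        Matrix.mulVec_transpose]
    rw [key]
    have hnn : 0 ≤ y ⬝ᵥ y := Finset.sum_nonneg fun i _ => mul_self_nonneg (y i)
    rcases eq_or_lt_of_le hnn with heq | hlt
    · exfalso
      exact hy ((dotProduct_self_eq_zero).1 heq.symm)
    · exact hlt

end Aux

theorem pascal_totallyNonneg_posDef (n : ℕ) :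
    TotallyNonneg
      (Matrix.of fun i j : Fin n => (Nat.choose ((i : ℕ) + (j : ℕ)) (i : ℕ) : ℝ)) ∧
    (Matrix.of fun i j : Fin n =>
      (Nat.choose ((i : ℕ) + (j : ℕ)) (i : ℕ) : ℝ)).PosDef := by
  rw [pascal_factor n]
  exact ⟨pascal_TN n, pascal_PD n⟩
end

section
/- If A is a nonsingular totally nonnegative n×n matrix, then all leading principal minors of A are positive; in particular A admits an LU factorization with L unit lower triangular and U upper triangular with positive diagonal. -/
open Matrix Fin

lemma snocStrictMono {m n : ℕ} {f : Fin m → Fin n} (hf : StrictMono f) {a : Fin n}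
    (ha : ∀ j, f j < a) : StrictMono (Fin.snoc f a : Fin (m+1) → Fin n) := by
  intro p q hpq
  induction q using Fin.lastCases with
  | last =>
      have hp : p ≠ Fin.last m := hpq.ne
      rw [← Fin.castSucc_castPred p hp]
      simp only [Fin.snoc_castSucc, Fin.snoc_last]
      exact ha _
  | cast q' =>
      have hq : p < Fin.last m := lt_of_lt_of_le hpq (Fin.castSucc_lt_last q').le
      have hp : p ≠ Fin.last m := hq.ne
      rw [← Fin.castSucc_castPred p hp]
      simp only [Fin.snoc_castSucc]
      exact hf (by
        have := hpq
        rw [← Fin.castSucc_castPred p hp] at this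
        exact Fin.castSucc_lt_castSucc_iff.mp this)

/-- Summing a vector supported on the image of `castLE`. -/
lemma sum_castLE {K n : ℕ} (hK : K ≤ n) (f : Fin n → ℝ)
    (h0 : ∀ j : Fin n, ¬ j.1 < K → f j = 0) :
    ∑ j : Fin n, f j = ∑ p : Fin K, f (Fin.castLE hK p) := by
  classical
  have : ∑ p : Fin K, f (Fin.castLE hK p)
      = ∑ j ∈ Finset.univ.map (Fin.castLEOrderEmb hK).toEmbedding, f j := by
    rw [Finset.sum_map]
    rfl
  rw [this]
  refine (Finset.sum_subset (Finset.subset_univ _) ?_).symm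
  intro j _ hj
  refine h0 j fun hlt => hj ?_
  simp only [Finset.mem_map, Finset.mem_univ, true_and]
  exact ⟨⟨j.1, hlt⟩, Fin.ext rfl⟩

lemma leading_pos {n : ℕ} (A : Matrix (Fin n) (Fin n) ℝ) (hTN : TotallyNonneg A)
    (hns : A.det ≠ 0) :
    ∀ (k : ℕ) (hk : k ≤ n), 0 < (A.submatrix (Fin.castLE hk) (Fin.castLE hk)).det := by
  intro k
  induction k with
  | zero => intro hk; simp
  | succ m IH =>
    intro hK
    have hm : m ≤ n := le_trans (Nat.le_succ m) hK
    have hAm : 0 < (A.submatrix (Fin.castLE hm) (Fin.castLE hm)).det := IH hm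
    have hge : 0 ≤ (A.submatrix (Fin.castLE hK) (Fin.castLE hK)).det :=
      hTN (m+1) _ _ (Fin.strictMono_castLE hK) (Fin.strictMono_castLE hK)
    rcases hge.lt_or_eq with h | h0
    · exact h
    exfalso
    have h0 : (A.submatrix (Fin.castLE hK) (Fin.castLE hK)).det = 0 := h0.symm
    -- kernel vector
    obtain ⟨x, hx0, hxker⟩ := Matrix.exists_mulVec_eq_zero_iff.mpr h0
    have hxlast : x (Fin.last m) ≠ 0 := by
      intro hl
      have hx' : (A.submatrix (Fin.castLE hm) (Fin.castLE hm)) *ᵥ (x ∘ Fin.castSucc) = 0 := by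
        funext i
        have h1 := congrFun hxker (Fin.castSucc i)
        simp only [Matrix.mulVec, dotProduct, Pi.zero_apply, Matrix.submatrix_apply] at h1 ⊢
        rw [Fin.sum_univ_castSucc] at h1
        simp only [hl, mul_zero, add_zero] at h1
        convert h1 using 2
        rfl
      have hxz : x ∘ Fin.castSucc = 0 := by
        by_contra hne
        exact hAm.ne' (Matrix.exists_mulVec_eq_zero_iff.mp ⟨_, hne, hx'⟩)
      apply hx0
      funext p
      induction p using Fin.lastCases with
      | last => exact hl
      | cast p' => exact congrFun hxz p'
    -- wlog last coordinate positive
    obtain ⟨x, hxker, hxl⟩ : ∃ x : Fin (m+1) → ℝ,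
        (A.submatrix (Fin.castLE hK) (Fin.castLE hK)) *ᵥ x = 0 ∧ 0 < x (Fin.last m) := by
      rcases lt_or_gt_of_ne hxlast with hneg | hpos
      · exact ⟨-x, by rw [Matrix.mulVec_neg, hxker, neg_zero], by simpa using hneg⟩
      · exact ⟨x, hxker, hpos⟩
    clear hx0 hxlast
    -- the combination of the first m+1 columns of A with coefficients x
    set v : Fin n → ℝ := fun i => ∑ j : Fin (m+1), x j * A i (Fin.castLE hK j) with hv
    have hv0 : ∀ p : Fin (m+1), v (Fin.castLE hK p) = 0 := by
      intro p
      have h1 := congrFun hxker p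
      simp only [Matrix.mulVec, dotProduct, Pi.zero_apply, Matrix.submatrix_apply] at h1
      rw [hv]
      simpa [mul_comm] using h1
    -- Step A : v is nonnegative on the remaining rows
    have hvnn : ∀ i : Fin n, m + 1 ≤ i.1 → 0 ≤ v i := by
      intro i hi
      have hrlt : ∀ j : Fin m, Fin.castLE hm j < i := by
        intro j
        have := j.isLt
        simp only [Fin.lt_def, Fin.coe_castLE]
        omega
      set r : Fin (m+1) → Fin n := Fin.snoc (fun j : Fin m => Fin.castLE hm j) i with hrdef
      have hrmono : StrictMono r := snocStrictMono (Fin.strictMono_castLE hm) hrlt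
      set M := A.submatrix r (Fin.castLE hK) with hMdef
      have hdM : 0 ≤ M.det := hTN _ _ _ hrmono (Fin.strictMono_castLE hK)
      have hid := Matrix.det_updateCol_sum M (Fin.last m) x
      simp only [smul_eq_mul] at hid
      have hcol : (fun p => ∑ j, x j * M p j) = fun p : Fin (m+1) => v (r p) := rfl
      have hcol2 : (fun p : Fin (m+1) => v (r p))
          = v i • (Pi.single (Fin.last m) (1:ℝ) : Fin (m+1) → ℝ) := by
        funext p
        induction p using Fin.lastCases with
        | last => simp [hrdef]
        | cast p' =>
            have h2 : r (Fin.castSucc p') = Fin.castLE hK (Fin.castSucc p') := by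
              rw [hrdef]; simp only [Fin.snoc_castSucc]; exact Fin.ext rfl
            rw [h2, hv0 (Fin.castSucc p')]
            simp [Pi.single_eq_of_ne (Fin.castSucc_lt_last p').ne]
      have hsingle : (M.updateCol (Fin.last m) (Pi.single (Fin.last m) (1:ℝ))).det
          = (A.submatrix (Fin.castLE hm) (Fin.castLE hm)).det := by
        rw [Matrix.det_succ_column _ (Fin.last m)]
        rw [Finset.sum_eq_single (Fin.last m)]
        · rw [Matrix.updateCol_apply, if_pos rfl, Pi.single_eq_same, mul_one,
            Fin.succAbove_last, Fin.val_last, Even.neg_one_pow ⟨m, rfl⟩, one_mul]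
          congr 1
          ext p q
          simp [Matrix.updateCol_apply, (Fin.castSucc_lt_last q).ne, hMdef, hrdef,
            Fin.snoc_castSucc]
        · intro b _ hb
          simp [Matrix.updateCol_apply, Pi.single_eq_of_ne hb]
        · simp
      have hkey : x (Fin.last m) * M.det
          = v i * (A.submatrix (Fin.castLE hm) (Fin.castLE hm)).det := by
        rw [← hid, hcol, hcol2, Matrix.det_updateCol_smul, hsingle]
      nlinarith [mul_nonneg hxl.le hdM]
    by_cases hveq : v = 0
    · -- columns of A are linearly dependent
      apply hns
      rw [← Matrix.exists_mulVec_eq_zero_iff]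
      refine ⟨fun j : Fin n => if h : j.1 < m + 1 then x ⟨j.1, h⟩ else 0, ?_, ?_⟩
      · intro hc
        have := congrFun hc (Fin.castLE hK (Fin.last m))
        simp only [Fin.coe_castLE, Fin.val_last, Pi.zero_apply] at this
        rw [dif_pos (Nat.lt_succ_self m)] at this
        rw [show (⟨m, Nat.lt_succ_self m⟩ : Fin (m+1)) = Fin.last m from rfl] at this
        exact hxl.ne' this
      · funext i
        have hsum : ∑ j : Fin n,
            A i j * (if h : j.1 < m + 1 then x ⟨j.1, h⟩ else 0) = v i := by
          rw [sum_castLE hK (fun j => A i j * (if h : j.1 < m + 1 then x ⟨j.1, h⟩ else 0))]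
          · rw [hv]
            refine Finset.sum_congr rfl fun p _ => ?_
            simp only [Fin.coe_castLE]
            rw [dif_pos p.isLt]
            rw [show (⟨p.1, p.isLt⟩ : Fin (m+1)) = p from Fin.ext rfl]
            ring
          · intro j hj
            rw [dif_neg hj, mul_zero]
        simp only [Matrix.mulVec, dotProduct, Pi.zero_apply]
        rw [hsum, hveq]
        rfl
    · obtain ⟨i, hvi0⟩ : ∃ i, v i ≠ 0 := by
        by_contra hc; push_neg at hc; exact hveq (funext hc)
      have hi : m + 1 ≤ i.1 := by
        by_contra hc
        push_neg at hc
        refine hvi0 ?_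
        have h2 := hv0 ⟨i.1, hc⟩
        rwa [show Fin.castLE hK ⟨i.1, hc⟩ = i from Fin.ext rfl] at h2
      have hvi : 0 < v i := lt_of_le_of_ne (hvnn i hi) (Ne.symm hvi0)
      -- Step B
      have hB : ∀ s : Fin n, m ≤ s.1 →
          (A.submatrix (Fin.castLE hK) (Fin.snoc (fun j : Fin m => Fin.castLE hm j) s)).det
            = 0 := by
        intro s hs
        by_cases hsm : s.1 = m
        · have hcs : (Fin.snoc (fun j : Fin m => Fin.castLE hm j) s : Fin (m+1) → Fin n)
              = Fin.castLE hK := by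
            funext q
            induction q using Fin.lastCases with
            | last => rw [Fin.snoc_last]; exact Fin.ext (by simp [hsm])
            | cast q' => rw [Fin.snoc_castSucc]; exact Fin.ext rfl
          rw [hcs]; exact h0
        · have hs' : m + 1 ≤ s.1 := by omega
          set c2 : Fin (m+2) → Fin n := Fin.snoc (fun p : Fin (m+1) => Fin.castLE hK p) s with hc2
          set r2 : Fin (m+2) → Fin n := Fin.snoc (fun p : Fin (m+1) => Fin.castLE hK p) i with hr2
          have hlt2i : ∀ p : Fin (m+1), Fin.castLE hK p < i := fun p => by
            have := p.isLt; simp only [Fin.lt_def, Fin.coe_castLE]; omega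
          have hlt2s : ∀ p : Fin (m+1), Fin.castLE hK p < s := fun p => by
            have := p.isLt; simp only [Fin.lt_def, Fin.coe_castLE]; omega
          have hr2m : StrictMono r2 := snocStrictMono (Fin.strictMono_castLE hK) hlt2i
          have hc2m : StrictMono c2 := snocStrictMono (Fin.strictMono_castLE hK) hlt2s
          set P := A.submatrix r2 c2 with hP
          have hdP : 0 ≤ P.det := hTN _ _ _ hr2m hc2m
          set x2 : Fin (m+2) → ℝ := Fin.snoc x 0 with hx2
          set p0 : Fin (m+2) := Fin.castSucc (Fin.last m) with hp0
          have hid := Matrix.det_updateCol_sum P p0 x2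
          simp only [smul_eq_mul] at hid
          have hx2p0 : x2 p0 = x (Fin.last m) := by rw [hx2, hp0, Fin.snoc_castSucc]
          have hcolv : (fun p => ∑ j, x2 j * P p j) = fun p : Fin (m+2) => v (r2 p) := by
            funext p
            rw [Fin.sum_univ_castSucc]
            simp only [hx2, Fin.snoc_castSucc, Fin.snoc_last, zero_mul, add_zero]
            rw [hv]
            refine Finset.sum_congr rfl fun j _ => ?_
            congr 1
            rw [hP]
            simp only [Matrix.submatrix_apply, hc2, Fin.snoc_castSucc]
          have hcol2 : (fun p : Fin (m+2) => v (r2 p))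
              = v i • (Pi.single (Fin.last (m+1)) (1:ℝ) : Fin (m+2) → ℝ) := by
            funext p
            induction p using Fin.lastCases with
            | last => simp [hr2]
            | cast p' =>
                rw [show r2 (Fin.castSucc p') = Fin.castLE hK p' from by
                  rw [hr2]; simp [Fin.snoc_castSucc]]
                rw [hv0 p']
                simp [Pi.single_eq_of_ne (Fin.castSucc_lt_last p').ne]
          set c' : Fin (m+1) → Fin n := Fin.snoc (fun j : Fin m => Fin.castLE hm j) s with hc'
          have hQ : (P.updateCol p0 (Pi.single (Fin.last (m+1)) (1:ℝ))).det
              = - (A.submatrix (Fin.castLE hK) c').det := by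
            rw [Matrix.det_succ_column _ p0]
            rw [Finset.sum_eq_single (Fin.last (m+1))]
            · rw [Matrix.updateCol_apply, if_pos rfl, Pi.single_eq_same, mul_one]
              have hodd : ((-1:ℝ))^(((Fin.last (m+1)):Fin (m+2)).1 + (p0:Fin (m+2)).1) = -1 := by
                refine Odd.neg_one_pow ⟨m, ?_⟩
                rw [Fin.val_last, hp0, Fin.coe_castSucc, Fin.val_last]
                ring
              rw [hodd, neg_one_mul]
              congr 2
              rw [Fin.succAbove_last]
              ext p q
              simp only [Matrix.submatrix_apply, Matrix.updateCol_apply,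
                if_neg (Fin.succAbove_ne p0 q), hP, hr2, Fin.snoc_castSucc]
              congr 1
              by_cases hq : q = Fin.last m
              · subst hq
                rw [show p0.succAbove (Fin.last m) = Fin.last (m+1) from ?_]
                · rw [hc2, Fin.snoc_last, hc', Fin.snoc_last]
                · rw [Fin.succAbove_of_le_castSucc _ _ (le_of_eq hp0), Fin.succ_last]
              · have hlt : Fin.castSucc q < p0 := by
                  rw [hp0]
                  exact Fin.castSucc_lt_castSucc_iff.mpr (Fin.lt_last_iff_ne_last.mpr hq)
                rw [Fin.succAbove_of_castSucc_lt _ _ hlt, hc2, Fin.snoc_castSucc]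
                conv_rhs => rw [← Fin.castSucc_castPred q hq, hc', Fin.snoc_castSucc]
                exact Fin.ext rfl
            · intro b _ hb
              simp [Matrix.updateCol_apply, Pi.single_eq_of_ne hb]
            · simp
          have hdc' : 0 ≤ (A.submatrix (Fin.castLE hK) c').det := by
            refine hTN _ _ _ (Fin.strictMono_castLE hK)
              (snocStrictMono (Fin.strictMono_castLE hm) ?_)
            intro j
            have := j.isLt
            simp only [Fin.lt_def, Fin.coe_castLE]; omega
          have hkey : x (Fin.last m) * P.det
              = - (v i * (A.submatrix (Fin.castLE hK) c').det) := by
            rw [← hx2p0, ← hid, hcolv, hcol2, Matrix.det_updateCol_smul, hQ]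
            ring
          exact le_antisymm (by nlinarith [mul_nonneg hxl.le hdP]) hdc'
      -- Step C : rows 0..m of A are linearly dependent
      apply hns
      rw [← Matrix.exists_vecMul_eq_zero_iff]
      set z : Fin (m+1) → ℝ := fun p =>
        (-1)^(p.1 + m) * (A.submatrix (Fin.castLE hK ∘ p.succAbove) (Fin.castLE hm)).det with hz
      have hzdet : ∀ s : Fin n,
          ∑ p : Fin (m+1), z p * A (Fin.castLE hK p) s
            = (A.submatrix (Fin.castLE hK)
                (Fin.snoc (fun j : Fin m => Fin.castLE hm j) s)).det := by
        intro s
        rw [Matrix.det_succ_column _ (Fin.last m)]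
        refine Finset.sum_congr rfl fun p _ => ?_
        have h1 : (A.submatrix (Fin.castLE hK)
              (Fin.snoc (fun j : Fin m => Fin.castLE hm j) s)).submatrix
                p.succAbove (Fin.last m).succAbove
            = A.submatrix (Fin.castLE hK ∘ p.succAbove) (Fin.castLE hm) := by
          rw [Fin.succAbove_last]
          ext a b
          simp only [Matrix.submatrix_apply, Fin.snoc_castSucc, Function.comp_apply]
        rw [h1]
        simp only [hz, Matrix.submatrix_apply, Fin.snoc_last, Fin.val_last]
        ring
      have hzero : ∀ s : Fin n, ∑ p : Fin (m+1), z p * A (Fin.castLE hK p) s = 0 := by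
        intro s
        rw [hzdet]
        by_cases hs : m ≤ s.1
        · exact hB s hs
        · push_neg at hs
          refine Matrix.det_zero_of_column_eq
            (i := Fin.castSucc ⟨s.1, hs⟩) (j := Fin.last m)
            (Fin.castSucc_lt_last _).ne ?_
          intro k
          simp only [Matrix.submatrix_apply, Fin.snoc_castSucc, Fin.snoc_last]
          exact congrArg (A (Fin.castLE hK k)) (Fin.ext rfl)
      have hzlast : z (Fin.last m) = (A.submatrix (Fin.castLE hm) (Fin.castLE hm)).det := by
        simp only [hz, Fin.val_last, Even.neg_one_pow ⟨m, rfl⟩, one_mul]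
        congr 1
        rw [Fin.succAbove_last]
        ext a b
        simp only [Matrix.submatrix_apply, Function.comp_apply]
        exact congrArg (fun t => A t (Fin.castLE hm b)) (Fin.ext rfl)
      refine ⟨fun j : Fin n => if h : j.1 < m + 1 then z ⟨j.1, h⟩ else 0, ?_, ?_⟩
      · intro hcz
        have h3 := congrFun hcz (Fin.castLE hK (Fin.last m))
        simp only [Fin.coe_castLE, Fin.val_last, Pi.zero_apply] at h3
        rw [dif_pos (Nat.lt_succ_self m)] at h3
        rw [show (⟨m, Nat.lt_succ_self m⟩ : Fin (m+1)) = Fin.last m from rfl] at h3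
        rw [hzlast] at h3
        exact hAm.ne' h3
      · funext s
        simp only [Matrix.vecMul, dotProduct, Pi.zero_apply]
        rw [sum_castLE hK (fun j => (if h : j.1 < m+1 then z ⟨j.1,h⟩ else 0) * A j s)]
        · rw [← hzero s]
          refine Finset.sum_congr rfl fun p _ => ?_
          simp only [Fin.coe_castLE]
          rw [dif_pos p.isLt, show (⟨p.1, p.isLt⟩ : Fin (m+1)) = p from Fin.ext rfl]
        · intro j hj; rw [dif_neg hj, zero_mul]

lemma lu_of_pos : ∀ (n : ℕ) (A : Matrix (Fin n) (Fin n) ℝ),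
    (∀ (k : ℕ) (hk : k ≤ n), 0 < (A.submatrix (Fin.castLE hk) (Fin.castLE hk)).det) →
    ∃ L U : Matrix (Fin n) (Fin n) ℝ,
      L.BlockTriangular (OrderDual.toDual) ∧ (∀ i, L i i = 1) ∧
      U.BlockTriangular id ∧ (∀ i, 0 < U i i) ∧ A = L * U := by
  intro n
  induction n with
  | zero =>
      intro A _
      refine ⟨1, 1, Matrix.blockTriangular_one, fun i => i.elim0, Matrix.blockTriangular_one,
        fun i => i.elim0, ?_⟩
      ext i j
      exact i.elim0
  | succ n IH =>
      intro A hpos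
      set A' := A.submatrix (Fin.castSucc : Fin n → Fin (n+1)) Fin.castSucc with hA'
      have hpos' : ∀ (k : ℕ) (hk : k ≤ n),
          0 < (A'.submatrix (Fin.castLE hk) (Fin.castLE hk)).det := by
        intro k hk
        have h2 := hpos k (hk.trans (Nat.le_succ n))
        rw [hA', Matrix.submatrix_submatrix]
        convert h2 using 2
        rfl
      obtain ⟨L', U', hLt, hLd, hUt, hUd, hA⟩ := IH A' hpos'
      have hdetL' : L'.det = 1 := by
        rw [Matrix.det_of_lowerTriangular L' hLt]
        simp [hLd]
      have hdetU' : 0 < U'.det := by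
        rw [Matrix.det_of_upperTriangular hUt]
        exact Finset.prod_pos fun i _ => hUd i
      have hL'unit : IsUnit L'.det := by rw [hdetL']; exact isUnit_one
      have hU'unit : IsUnit U'.det := (Ne.isUnit hdetU'.ne')
      set u : Fin n → ℝ := L'⁻¹ *ᵥ (fun i => A (Fin.castSucc i) (Fin.last n)) with hu
      set l : Fin n → ℝ := (fun j => A (Fin.last n) (Fin.castSucc j)) ᵥ* U'⁻¹ with hl
      set δ : ℝ := A (Fin.last n) (Fin.last n) - l ⬝ᵥ u with hδ
      set L : Matrix (Fin (n+1)) (Fin (n+1)) ℝ := Matrix.of (fun p q =>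
        if hp : p = Fin.last n then
          (if hq : q = Fin.last n then (1:ℝ) else l (q.castPred hq))
        else if hq : q = Fin.last n then 0
        else L' (p.castPred hp) (q.castPred hq)) with hLdef
      set U : Matrix (Fin (n+1)) (Fin (n+1)) ℝ := Matrix.of (fun p q =>
        if hp : p = Fin.last n then (if q = Fin.last n then δ else (0:ℝ))
        else if hq : q = Fin.last n then u (p.castPred hp)
        else U' (p.castPred hp) (q.castPred hq)) with hUdef
      have hne : ∀ p : Fin n, (Fin.castSucc p) ≠ Fin.last n :=
        fun p => (Fin.castSucc_lt_last p).ne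
      have Lcc : ∀ p q : Fin n, L (Fin.castSucc p) (Fin.castSucc q) = L' p q := by
        intro p q; rw [hLdef]
        simp [hne p, hne q, Fin.castPred_castSucc]
      have Lcl : ∀ p : Fin n, L (Fin.castSucc p) (Fin.last n) = 0 := by
        intro p; rw [hLdef]; simp [hne p]
      have Llc : ∀ q : Fin n, L (Fin.last n) (Fin.castSucc q) = l q := by
        intro q; rw [hLdef]; simp [hne q, Fin.castPred_castSucc]
      have Lll : L (Fin.last n) (Fin.last n) = 1 := by
        rw [hLdef]; simp
      have Ucc : ∀ p q : Fin n, U (Fin.castSucc p) (Fin.castSucc q) = U' p q := by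
        intro p q; rw [hUdef]
        simp [hne p, hne q, Fin.castPred_castSucc]
      have Ucl : ∀ p : Fin n, U (Fin.castSucc p) (Fin.last n) = u p := by
        intro p; rw [hUdef]; simp [hne p, Fin.castPred_castSucc]
      have Ulc : ∀ q : Fin n, U (Fin.last n) (Fin.castSucc q) = 0 := by
        intro q; rw [hUdef]; simp [hne q]
      have Ull : U (Fin.last n) (Fin.last n) = δ := by
        rw [hUdef]; simp
      have hAeq : A = L * U := by
        ext p q
        rw [Matrix.mul_apply, Fin.sum_univ_castSucc]
        induction p using Fin.lastCases with
        | last =>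
            induction q using Fin.lastCases with
            | last =>
                simp only [Llc, Ucl, Lll, Ull]
                rw [hδ]
                simp only [dotProduct]
                ring
            | cast q' =>
                simp only [Llc, Ucc, Lll, Ulc, one_mul, mul_zero, add_zero]
                have h2 : ∑ k, l k * U' k q'
                    = (((fun j => A (Fin.last n) (Fin.castSucc j)) ᵥ* U'⁻¹) ᵥ* U') q' := by
                  rw [← hl]; rfl
                rw [h2, Matrix.vecMul_vecMul, Matrix.nonsing_inv_mul U' hU'unit,
                  Matrix.vecMul_one]
        | cast p' =>
            induction q using Fin.lastCases with
            | last =>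
                simp only [Lcc, Ucl, Lcl, Ull, zero_mul, add_zero]
                have h2 : ∑ k, L' p' k * u k
                    = (L' *ᵥ (L'⁻¹ *ᵥ (fun i => A (Fin.castSucc i) (Fin.last n)))) p' := by
                  rw [← hu]; rfl
                rw [h2, Matrix.mulVec_mulVec, Matrix.mul_nonsing_inv L' hL'unit,
                  Matrix.one_mulVec]
            | cast q' =>
                simp only [Lcc, Ucc, Lcl, Ulc, zero_mul, add_zero]
                have h2 : ∑ k, L' p' k * U' k q' = (L' * U') p' q' :=
                  (Matrix.mul_apply).symm
                rw [h2, ← hA, hA']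
                rfl
      have hLtri : L.BlockTriangular (OrderDual.toDual) := by
        intro p q hpq
        have hpq' : p < q := hpq
        induction q using Fin.lastCases with
        | last =>
            have hp : p ≠ Fin.last n := hpq'.ne
            rw [← Fin.castSucc_castPred p hp, Lcl]
        | cast q' =>
            have hp : p ≠ Fin.last n :=
              (lt_of_lt_of_le hpq' (Fin.castSucc_lt_last q').le).ne
            rw [← Fin.castSucc_castPred p hp, Lcc]
            refine hLt ?_
            show p.castPred hp < q' 
            refine Fin.castSucc_lt_castSucc_iff.mp ?_
            rwa [Fin.castSucc_castPred]
      have hUtri : U.BlockTriangular id := by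
        intro p q hpq
        have hpq' : q < p := hpq
        induction p using Fin.lastCases with
        | last =>
            have hq : q ≠ Fin.last n := hpq'.ne
            rw [← Fin.castSucc_castPred q hq, Ulc]
        | cast p' =>
            have hq : q ≠ Fin.last n :=
              (lt_of_lt_of_le hpq' (Fin.castSucc_lt_last p').le).ne
            rw [← Fin.castSucc_castPred q hq, Ucc]
            refine hUt ?_
            show q.castPred hq < p'
            refine Fin.castSucc_lt_castSucc_iff.mp ?_
            rwa [Fin.castSucc_castPred]
      have hLdiag : ∀ i, L i i = 1 := by
        intro i
        induction i using Fin.lastCases with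
        | last => exact Lll
        | cast i' => rw [Lcc]; exact hLd i'
      have hdetA : 0 < A.det := by
        have h2 := hpos (n+1) le_rfl
        rwa [show A.submatrix (Fin.castLE le_rfl) (Fin.castLE le_rfl) = A from by
          ext p q; rfl] at h2
      have hdetL : L.det = 1 := by
        rw [Matrix.det_of_lowerTriangular L hLtri]
        exact Finset.prod_eq_one fun i _ => hLdiag i
      have hdetU : U.det = U'.det * δ := by
        rw [Matrix.det_of_upperTriangular hUtri, Fin.prod_univ_castSucc, Ull,
          Matrix.det_of_upperTriangular hUt]
        congr 1
        exact Finset.prod_congr rfl fun i _ => Ucc i i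
      have hδpos : 0 < δ := by
        have h2 : A.det = U'.det * δ := by
          rw [hAeq, Matrix.det_mul, hdetL, one_mul, hdetU]
        by_contra hcon
        push_neg at hcon
        nlinarith [mul_nonpos_of_nonneg_of_nonpos hdetU'.le hcon]
      have hUdiag : ∀ i, 0 < U i i := by
        intro i
        induction i using Fin.lastCases with
        | last => rw [Ull]; exact hδpos
        | cast i' => rw [Ucc]; exact hUd i'
      exact ⟨L, U, hLtri, hLdiag, hUtri, hUdiag, hAeq⟩

theorem nonsingular_TN_leading_minors_pos_and_LU (n : ℕ)
    (A : Matrix (Fin n) (Fin n) ℝ) (hTN : TotallyNonneg A) (hns : A.det ≠ 0) :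
    (∀ (k : ℕ) (hk : k ≤ n),
      0 < (A.submatrix (Fin.castLE hk) (Fin.castLE hk)).det) ∧
    ∃ L U : Matrix (Fin n) (Fin n) ℝ,
      L.BlockTriangular (OrderDual.toDual) ∧ (∀ i, L i i = 1) ∧
      U.BlockTriangular id ∧ (∀ i, 0 < U i i) ∧
      A = L * U := by
  have h1 := leading_pos A hTN hns
  exact ⟨h1, lu_of_pos n A h1⟩
end
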